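/- arXiv:2010.11873 — 10 statements merged into one kernel-verified Lean document; each statement's English description precedes it below -/
import Mathlib

section
/- Let F be a field, η ∈ F, and i a natural number. Then the dimension of ⟨η⟩_i as an F-vector space equals i. -/
open scoped Classical in
/-- `geomSpace F lam s` is the subspace `⟨λ⟩ₛ` of the `F`-algebra of sequences `ℕ → F`:
for `λ ≠ 0` it is spanned by the sequences `k ↦ C(k, i) * λ ^ k` for `0 ≤ i ≤ s - 1`;
`⟨0⟩ₛ` is spanned by the Kronecker-delta sequences `k ↦ δ_{i,k}` for `0 ≤ i ≤ s - 1`;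
`⟨η⟩₀` is the zero subspace. -/
noncomputable def geomSpace (F : Type*) [Field F] (lam : F) (s : ℕ) : Submodule F (ℕ → F) :=
  if lam = 0 then
    Submodule.span F ((fun i : ℕ => (fun k : ℕ => if k = i then (1 : F) else 0)) '' {i | i < s})
  else
    Submodule.span F ((fun i : ℕ => (fun k : ℕ => (k.choose i : F) * lam ^ k)) '' {i | i < s})

lemma image_eq_range_fin {α : Type*} (f : ℕ → α) (s : ℕ) :
    f '' {i | i < s} = Set.range (fun j : Fin s => f j) := by
  ext x
  simp only [Set.mem_image, Set.mem_setOf_eq, Set.mem_range]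
  constructor
  · rintro ⟨j, hj, rfl⟩; exact ⟨⟨j, hj⟩, rfl⟩
  · rintro ⟨j, rfl⟩; exact ⟨j, j.isLt, rfl⟩

lemma li_of_matrix {F : Type*} [Field F] {s : ℕ} (v : ℕ → ℕ → F)
    (hdet : (Matrix.of fun k j : Fin s => v (j : ℕ) (k : ℕ)).det ≠ 0) :
    LinearIndependent F (fun j : Fin s => v (j : ℕ)) := by
  set M : Matrix (Fin s) (Fin s) F := Matrix.of fun k j : Fin s => v (j : ℕ) (k : ℕ) with hMdef
  have hM : LinearIndependent F (fun j : Fin s => M.transpose j) :=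
    Matrix.linearIndependent_cols_iff_isUnit.2 ((Matrix.isUnit_iff_isUnit_det M).2 hdet.isUnit)
  have hcomp : LinearIndependent F
      (fun j : Fin s => (LinearMap.funLeft F F (Fin.val : Fin s → ℕ)) (v (j : ℕ))) := hM
  exact LinearIndependent.of_comp _ hcomp

lemma li_delta (F : Type*) [Field F] (s : ℕ) :
    LinearIndependent F (fun j : Fin s => (fun k : ℕ => if k = (j : ℕ) then (1 : F) else 0)) := by
  apply li_of_matrix (fun i => fun k : ℕ => if k = i then (1 : F) else 0)
  have : (Matrix.of fun k j : Fin s => if (k : ℕ) = (j : ℕ) then (1 : F) else 0) =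
      (1 : Matrix (Fin s) (Fin s) F) := by
    ext k j
    simp [Matrix.one_apply, Fin.val_inj]
  rw [this, Matrix.det_one]
  exact one_ne_zero

lemma li_choose (F : Type*) [Field F] (lam : F) (hl : lam ≠ 0) (s : ℕ) :
    LinearIndependent F
      (fun j : Fin s => (fun k : ℕ => ((k.choose (j : ℕ) : F) * lam ^ k))) := by
  apply li_of_matrix (fun i => fun k : ℕ => ((k.choose i : F) * lam ^ k))
  rw [Matrix.det_of_lowerTriangular _ (by
    intro a b hab
    have : (a : ℕ).choose (b : ℕ) = 0 := Nat.choose_eq_zero_of_lt (by exact_mod_cast hab)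
    simp [this])]
  exact Finset.prod_ne_zero_iff.2 fun k _ => by
    simp [pow_ne_zero _ hl]

/-- Let `F` be a field, `η ∈ F` and `i` a natural number. Then `dim ⟨η⟩ᵢ = i`. -/
theorem finrank_geomSpace (F : Type*) [Field F] (η : F) (i : ℕ) :
    Module.finrank F (geomSpace F η i) = i := by
  rcases eq_or_ne η 0 with h | h
  · rw [geomSpace, if_pos h, image_eq_range_fin, finrank_span_eq_card (li_delta F i),
      Fintype.card_fin]
  · rw [geomSpace, if_neg h, image_eq_range_fin, finrank_span_eq_card (li_choose F η h i),
      Fintype.card_fin]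
end

section
/- Let F be a field and let i, j be natural numbers. Then ⟨1⟩_i · ⟨1⟩_j = ⟨1⟩_{i ∧ j}. -/
/-!
Write `e n` for the sequence `k ↦ C(k, n)`, so that `⟨1⟩ₛ` is spanned by `e 0, …, e (s - 1)`.
Vandermonde's identity and trinomial revision give
`e a * e b = ∑_{m ≤ b} C(a + m, a) C(a, b - m) • e (a + m)`, an expansion that is triangular with
leading coefficient `C(a + b, a)`. Hence `⟨1⟩ᵢ · ⟨1⟩ⱼ` is spanned by the `e (a + m)` with `a < i`,
`m < j` and `C(a + m, a) ≠ 0` in `F`. By Pascal's rule, if `C(a + b, a) ≠ 0` then every `c ≤ a + b`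
splits as `a' + b'` with `a' ≤ a`, `b' ≤ b` and `C(c, a') ≠ 0`, so these indices are exactly the
`c < i ∧ j`.
-/

open scoped Classical in
/-- For positive integers `s`, `t`, `wedge F s t` is the largest value of `i + j + 1` over
pairs `0 ≤ i ≤ s-1`, `0 ≤ j ≤ t-1` such that the binomial coefficient `C(i+j, i)`, viewed
as an element of `F`, is nonzero; moreover `wedge F s 0 = wedge F 0 t = 0`. -/
noncomputable def wedge (F : Type*) [Field F] (s t : ℕ) : ℕ :=
  ((Finset.range s) ×ˢ (Finset.range t)).sup
    (fun p => if (((p.1 + p.2).choose p.1 : F)) ≠ 0 then p.1 + p.2 + 1 else 0)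

open Finset

theorem Nat.choose_mul_choose_eq_sum (k a b : ℕ) :
    k.choose a * k.choose b =
      ∑ m ∈ range (b + 1), (a + m).choose a * a.choose (b - m) * k.choose (a + m) := by
  have vandermonde : ∑ m ∈ range (b + 1), (k - a).choose m * a.choose (b - m) =
      (k - a + a).choose b := by
    rw [Nat.add_choose_eq, Nat.sum_antidiagonal_eq_sum_range_succ_mk]
  have hk : k.choose a * (k - a + a).choose b = k.choose a * k.choose b := by
    rcases le_or_gt a k with h | h
    · rw [Nat.sub_add_cancel h]
    · rw [Nat.choose_eq_zero_of_lt h, zero_mul, zero_mul]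
  rw [← hk, ← vandermonde, mul_sum]
  refine sum_congr rfl fun m _ => ?_
  rw [mul_comm ((a + m).choose a), mul_assoc, mul_comm _ (k.choose _),
    Nat.choose_mul (Nat.le_add_right a m), Nat.add_sub_cancel_left]
  ring

theorem exists_choose_ne_zero_of_add_eq_succ {R : Type*} [AddMonoidWithOne R] {a b c : ℕ}
    (h : ((a + b).choose a : R) ≠ 0) (habc : a + b = c + 1) :
    ∃ a' ≤ a, ∃ b' ≤ b, a' + b' = c ∧ (c.choose a' : R) ≠ 0 := by
  rcases a with _ | k
  · exact ⟨0, le_rfl, c, by omega, zero_add c, by simpa using h⟩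
  · have pascal : ((c + 1).choose (k + 1) : R) = c.choose k + c.choose (k + 1) := by
      rw [Nat.choose_succ_succ, Nat.cast_add]
    rw [habc, pascal] at h
    by_cases hk : (c.choose k : R) = 0
    · rw [hk, zero_add] at h
      have : k + 1 ≤ c := by
        by_contra hc
        exact h (by rw [Nat.choose_eq_zero_of_lt (by omega), Nat.cast_zero])
      exact ⟨k + 1, le_rfl, b - 1, by omega, by omega, h⟩
    · exact ⟨k, by omega, b, le_rfl, by omega, hk⟩

theorem exists_choose_ne_zero_of_le_add {R : Type*} [AddMonoidWithOne R] {a b c : ℕ}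
    (h : ((a + b).choose a : R) ≠ 0) (hc : c ≤ a + b) :
    ∃ a' ≤ a, ∃ b' ≤ b, a' + b' = c ∧ (c.choose a' : R) ≠ 0 := by
  obtain ⟨d, hd⟩ := Nat.exists_eq_add_of_le hc
  clear hc
  induction d generalizing c with
  | zero => subst hd; exact ⟨a, le_rfl, b, le_rfl, rfl, h⟩
  | succ d ih =>
    obtain ⟨a', ha', b', hb', hab', h'⟩ := ih (c := c + 1) (by omega)
    obtain ⟨a'', ha'', b'', hb'', habc, h''⟩ :=
      exists_choose_ne_zero_of_add_eq_succ (by rwa [hab']) hab'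
    exact ⟨a'', ha''.trans ha', b'', hb''.trans hb', habc, h''⟩

section wedge

variable {F : Type*} [Field F] {s t : ℕ}

theorem add_lt_wedge {a b : ℕ} (ha : a < s) (hb : b < t) (h : ((a + b).choose a : F) ≠ 0) :
    a + b < wedge F s t := by
  classical
  have hmem : (a, b) ∈ range s ×ˢ range t := mem_product.2 ⟨mem_range.2 ha, mem_range.2 hb⟩
  exact Nat.lt_of_succ_le (le_sup_of_le hmem (by simp [h]))

theorem lt_wedge_iff {c : ℕ} :
    c < wedge F s t ↔ ∃ a < s, ∃ b < t, a + b = c ∧ (c.choose a : F) ≠ 0 := by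
  classical
  refine ⟨fun hc => ?_, fun ⟨a, ha, b, hb, habc, h⟩ => habc ▸ add_lt_wedge ha hb (habc ▸ h)⟩
  obtain ⟨⟨a, b⟩, hab, hlt⟩ := Finset.lt_sup_iff.1 hc
  rw [mem_product, mem_range, mem_range] at hab
  by_cases h : ((a + b).choose a : F) = 0
  · simp [h] at hlt
  · rw [if_pos h] at hlt
    obtain ⟨a', ha', b', hb', habc, h'⟩ := exists_choose_ne_zero_of_le_add (c := c) h (by omega)
    exact ⟨a', by omega, b', by omega, habc, h'⟩

end wedge

def binomSeq (R : Type*) [Semiring R] (n : ℕ) : ℕ → R := fun k => (k.choose n : R)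

theorem binomSeq_mul {R : Type*} [Semiring R] (a b : ℕ) :
    binomSeq R a * binomSeq R b =
      ∑ m ∈ range (b + 1),
        (((a + m).choose a * a.choose (b - m) : ℕ) : R) • binomSeq R (a + m) := by
  funext k
  simp only [binomSeq, Pi.mul_apply, Finset.sum_apply, Pi.smul_apply, smul_eq_mul]
  exact_mod_cast congrArg (Nat.cast (R := R)) (Nat.choose_mul_choose_eq_sum k a b)

theorem geomSpace_one_eq_span (F : Type*) [Field F] (s : ℕ) :
    geomSpace F 1 s = Submodule.span F (binomSeq F '' Set.Iio s) := by
  simp only [geomSpace, one_ne_zero, if_false, one_pow, mul_one]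
  rfl

section span

variable {F : Type*} [Field F] {s t : ℕ}

open Submodule

theorem binomSeq_mul_mem_span_wedge {a b : ℕ} (ha : a < s) (hb : b < t) :
    binomSeq F a * binomSeq F b ∈ span F (binomSeq F '' Set.Iio (wedge F s t)) := by
  rw [binomSeq_mul]
  refine sum_mem fun m hm => ?_
  rw [Nat.cast_mul, mul_comm, mul_smul]
  refine smul_mem _ _ ?_
  by_cases h : ((a + m).choose a : F) = 0
  · rw [h, zero_smul]
    exact zero_mem _
  · have hm : m < t := by rw [mem_range] at hm; omega
    exact smul_mem _ _ (subset_span ⟨a + m, add_lt_wedge ha hm h, rfl⟩)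

theorem binomSeq_mem_span_mul_span {c : ℕ} (hc : c < wedge F s t) :
    binomSeq F c ∈ span F (binomSeq F '' Set.Iio s) * span F (binomSeq F '' Set.Iio t) := by
  set P := span F (binomSeq F '' Set.Iio s) * span F (binomSeq F '' Set.Iio t)
  induction c using Nat.strong_induction_on with
  | _ c ih =>
    obtain ⟨a, ha, b, hb, rfl, h⟩ := lt_wedge_iff.1 hc
    have hprod : binomSeq F a * binomSeq F b ∈ P :=
      mul_mem_mul (subset_span ⟨a, ha, rfl⟩) (subset_span ⟨b, hb, rfl⟩)
    have hlead : ((a + b).choose a : F) • binomSeq F (a + b) =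
        binomSeq F a * binomSeq F b - ∑ m ∈ range b,
          (((a + m).choose a * a.choose (b - m) : ℕ) : F) • binomSeq F (a + m) := by
      rw [binomSeq_mul, sum_range_succ, Nat.sub_self, Nat.choose_zero_right, mul_one,
        add_sub_cancel_left]
    have hlower : ∑ m ∈ range b,
        (((a + m).choose a * a.choose (b - m) : ℕ) : F) • binomSeq F (a + m) ∈ P := by
      refine sum_mem fun m hm => smul_mem _ _ (ih _ ?_ ?_) <;> rw [mem_range] at hm <;> omega
    have := smul_mem P ((a + b).choose a : F)⁻¹ (hlead ▸ sub_mem hprod hlower)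
    rwa [inv_smul_smul₀ h] at this

end span

/-- Let `F` be a field and `i`, `j` natural numbers. Then `⟨1⟩ᵢ · ⟨1⟩ⱼ = ⟨1⟩_{i ∧ j}`. -/
theorem geomSpace_one_mul (F : Type*) [Field F] (i j : ℕ) :
    geomSpace F 1 i * geomSpace F 1 j = geomSpace F 1 (wedge F i j) := by
  simp only [geomSpace_one_eq_span]
  refine le_antisymm ?_ (Submodule.span_le.2 ?_)
  · rw [Submodule.span_mul_span, Submodule.span_le]
    rintro _ ⟨_, ⟨a, ha, rfl⟩, _, ⟨b, hb, rfl⟩, rfl⟩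
    exact binomSeq_mul_mem_span_wedge ha hb
  · rintro _ ⟨c, hc, rfl⟩
    exact binomSeq_mem_span_mul_span hc
end

section
/- Let F be a field, λ ∈ F, and let s, t be natural numbers. Then ⟨0⟩_t · ⟨λ⟩_s = ⟨0⟩_{t ∧_λ s}. -/
open scoped Classical in
/-- `wedgeL lam t s` is the operation `t ∧_λ s`: it equals `min t s` if `λ = 0`,
`t` if `λ ≠ 0` and `s ≠ 0`, and `0` if `λ ≠ 0` and `s = 0`. -/
noncomputable def wedgeL {F : Type*} [Field F] (lam : F) (t s : ℕ) : ℕ :=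
  if lam = 0 then min t s else if s = 0 then 0 else t

/-- Let `F` be a field, `λ ∈ F`, and `s`, `t` natural numbers.
Then `⟨0⟩ₜ · ⟨λ⟩ₛ = ⟨0⟩_{t ∧_λ s}`. -/
theorem geomSpace_zero_mul (F : Type*) [Field F] (lam : F) (s t : ℕ) :
    geomSpace F 0 t * geomSpace F lam s = geomSpace F 0 (wedgeL lam t s) := by
  classical
  set D : ℕ → (ℕ → F) := fun i => (fun k : ℕ => if k = i then (1 : F) else 0) with hD
  by_cases hlam : lam = 0
  · subst hlam
    have hw : wedgeL (0 : F) t s = min t s := if_pos rfl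
    rw [hw]
    simp only [geomSpace, if_pos rfl, eq_self_iff_true, if_true]
    rw [Submodule.span_mul_span]
    apply le_antisymm
    · rw [Submodule.span_le]
      rintro x ⟨f, ⟨i, hi, rfl⟩, g, ⟨j, hj, rfl⟩, rfl⟩
      show D i * D j ∈ _
      by_cases hij : i = j
      · subst hij
        have heq : D i * D i = D i := by
          funext k; by_cases h : k = i <;> simp [hD, h]
        rw [heq]
        have hi' : i < t := hi
        have hj' : i < s := hj
        refine Submodule.subset_span (Set.mem_image_of_mem _ ?_)
        simp only [Set.mem_setOf_eq]
        omega
      · have heq : D i * D j = 0 := by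
          funext k
          simp only [hD, Pi.mul_apply, Pi.zero_apply]
          by_cases h1 : k = i
          · have h2 : ¬ k = j := by rw [h1]; exact hij
            rw [if_neg h2, mul_zero]
          · rw [if_neg h1, zero_mul]
        rw [heq]
        exact Submodule.zero_mem _
    · rw [Submodule.span_le]
      rintro x ⟨i, hi, rfl⟩
      show D i ∈ _
      have heq : D i = D i * D i := by
        funext k; by_cases h : k = i <;> simp [hD, h]
      rw [heq]
      exact Submodule.subset_span
        (Set.mul_mem_mul ⟨i, lt_of_lt_of_le hi (min_le_left t s), rfl⟩
          ⟨i, lt_of_lt_of_le hi (min_le_right t s), rfl⟩)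
  · set G : ℕ → (ℕ → F) := fun j => (fun k : ℕ => (k.choose j : F) * lam ^ k) with hG
    by_cases hs : s = 0
    · subst hs
      have hw : wedgeL lam t 0 = 0 := by simp [wedgeL, hlam]
      rw [hw]
      have hempty : {i : ℕ | i < 0} = (∅ : Set ℕ) := by
        ext i; simp
      have h0 : geomSpace F lam 0 = ⊥ := by
        simp [geomSpace, hlam, hempty]
      have h0' : geomSpace F (0 : F) 0 = ⊥ := by
        simp [geomSpace, hempty]
      rw [h0, h0', Submodule.mul_bot]
    · have hw : wedgeL lam t s = t := by simp [wedgeL, hlam, hs]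
      rw [hw]
      simp only [geomSpace, if_pos rfl, eq_self_iff_true, if_true, if_neg hlam]
      rw [Submodule.span_mul_span]
      apply le_antisymm
      · rw [Submodule.span_le]
        rintro x ⟨f, ⟨i, hi, rfl⟩, g, ⟨j, hj, rfl⟩, rfl⟩
        show D i * G j ∈ _
        have heq : D i * G j = ((i.choose j : F) * lam ^ i) • D i := by
          funext k
          by_cases h : k = i <;> simp [hD, hG, h, Pi.mul_apply]
        rw [heq]
        exact Submodule.smul_mem _ _ (Submodule.subset_span ⟨i, hi, rfl⟩)
      · rw [Submodule.span_le]
        rintro x ⟨i, hi, rfl⟩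
        show D i ∈ _
        have hlp : lam ^ i ≠ 0 := pow_ne_zero _ hlam
        have heq : D i = (lam ^ i)⁻¹ • (D i * G 0) := by
          funext k
          by_cases h : k = i <;>
            simp [hD, hG, h, Pi.mul_apply, inv_mul_cancel₀ hlp]
        rw [heq]
        exact Submodule.smul_mem _ _
          (Submodule.subset_span
            (Set.mul_mem_mul ⟨i, hi, rfl⟩ ⟨0, Nat.pos_of_ne_zero hs, rfl⟩))
end

section
/- Let F be a field and s, t positive integers. Then the minimal polynomial of the Kronecker product J_s(1) ⊗ J_t(1) is (X − 1)^{s ∧ t}. -/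
/-!
Write `N n = J_n(0)`, so that `J_n(1) = 1 + N n`. Then
`J_s(1) ⊗ J_t(1) - 1 = N s ⊗ J_t(1) + 1 ⊗ N t` is a sum of two commuting matrices, and its `k`-th
power is `∑ i, C(k, i) • N s ^ i ⊗ (J_t(1) ^ i * N t ^ (k - i))`. The `i`-th term survives only
if `i < s`, `k - i < t` and `C(k, i) ≠ 0` in `F`, so the power vanishes once `k ≥ s ∧ t`.
Conversely, for `i < s`, `j < t` with `C(i + j, i) ≠ 0`, only the `i`-th term contributes to the
`((0, 0), (i, j))` entry of the `(i + j)`-th power, and that entry is `C(i + j, i)`.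
-/

open Polynomial Matrix
open scoped Kronecker

/-- `jordan F s a` is the `s × s` Jordan block with eigenvalue `a`:
the entry `(i, j)` is `a` if `j = i`, `1` if `j = i + 1`, and `0` otherwise. -/
def jordan (F : Type*) [Field F] (s : ℕ) (a : F) : Matrix (Fin s) (Fin s) F :=
  Matrix.of fun i j => if (j : ℕ) = (i : ℕ) then a else if (j : ℕ) = (i : ℕ) + 1 then 1 else 0

section Jordan

variable {F : Type*} [Field F] {n : ℕ}

theorem jordan_apply (a : F) (i j : Fin n) :
    jordan F n a i j = if (j : ℕ) = i then a else if (j : ℕ) = i + 1 then 1 else 0 :=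
  rfl

theorem jordan_eq_smul_one_add (a : F) : jordan F n a = a • 1 + jordan F n 0 := by
  ext i j
  simp only [jordan_apply, Matrix.add_apply, Matrix.smul_apply, one_apply, smul_eq_mul]
  by_cases h : i = j
  · simp [h]
  · have : (j : ℕ) ≠ i := fun e => h (Fin.ext e.symm)
    simp [h, this]

theorem jordan_zero_pow_apply (m : ℕ) (i j : Fin n) :
    (jordan F n 0 ^ m) i j = if (j : ℕ) = i + m then 1 else 0 := by
  induction m generalizing j with
  | zero => simp [one_apply, Fin.ext_iff, eq_comm]
  | succ m ih =>
    simp only [pow_succ, mul_apply, ih, jordan_apply]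
    rw [Fin.sum_univ_eq_sum_range (fun l => (if l = (i : ℕ) + m then (1 : F) else 0) *
      if (j : ℕ) = l then 0 else if (j : ℕ) = l + 1 then 1 else 0)]
    simp only [ite_mul, one_mul, zero_mul, Finset.sum_ite_eq', Finset.mem_range]
    split_ifs <;> first | rfl | omega

theorem jordan_zero_pow_eq_zero {m : ℕ} (h : n ≤ m) : jordan F n 0 ^ m = 0 := by
  ext i j
  rw [jordan_zero_pow_apply, if_neg (by omega), Matrix.zero_apply]

theorem jordan_pow_apply_zero_zero [NeZero n] (a : F) (m : ℕ) :
    (jordan F n a ^ m) 0 0 = a ^ m := by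
  induction m with
  | zero => simp
  | succ m ih =>
    rw [pow_succ, mul_apply, Finset.sum_eq_single 0, ih, pow_succ]
    · rw [jordan_apply, if_pos rfl]
    · intro l _ hl
      have : (0 : ℕ) ≠ l := (Fin.val_ne_zero_iff.mpr hl).symm
      simp [jordan_apply, this]
    · simp

end Jordan

section Kronecker

variable {R : Type*} [CommRing R] {m n : Type*} [Fintype m] [Fintype n] [DecidableEq m]
  [DecidableEq n]

theorem kronecker_pow (A : Matrix m m R) (B : Matrix n n R) (k : ℕ) :
    (A ⊗ₖ B) ^ k = (A ^ k) ⊗ₖ (B ^ k) := by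
  induction k with
  | zero => simp
  | succ k ih => rw [pow_succ, pow_succ, pow_succ, ih, mul_kronecker_mul]

theorem kronecker_add_one_kronecker_pow (A : Matrix m m R) {B C : Matrix n n R}
    (hBC : Commute B C) (k : ℕ) :
    (A ⊗ₖ B + 1 ⊗ₖ C) ^ k =
      ∑ i ∈ Finset.range (k + 1), k.choose i • ((A ^ i) ⊗ₖ (B ^ i * C ^ (k - i))) := by
  have hcomm : Commute (A ⊗ₖ B) (1 ⊗ₖ C) := by
    simp only [Commute, SemiconjBy, ← mul_kronecker_mul, mul_one, one_mul, hBC.eq]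
  rw [hcomm.add_pow]
  refine Finset.sum_congr rfl fun i _ => ?_
  rw [kronecker_pow, kronecker_pow, one_pow, ← mul_kronecker_mul, mul_one, ← nsmul_eq_mul']

end Kronecker

section Wedge

variable {F : Type*} [Field F] {s t : ℕ}

theorem le_wedge {i j : ℕ} (hi : i < s) (hj : j < t) (h : ((i + j).choose i : F) ≠ 0) :
    i + j + 1 ≤ wedge F s t := by
  classical
  have := Finset.le_sup (f := fun p : ℕ × ℕ =>
    if (((p.1 + p.2).choose p.1 : F)) ≠ 0 then p.1 + p.2 + 1 else 0)
    (show (i, j) ∈ Finset.range s ×ˢ Finset.range t from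
      Finset.mem_product.2 ⟨Finset.mem_range.2 hi, Finset.mem_range.2 hj⟩)
  simpa [wedge, h] using this

theorem exists_wedge_eq (hs : 0 < s) (ht : 0 < t) :
    ∃ i < s, ∃ j < t, ((i + j).choose i : F) ≠ 0 ∧ wedge F s t = i + j + 1 := by
  classical
  have hpos : 1 ≤ wedge F s t := le_wedge (i := 0) (j := 0) hs ht (by simp)
  obtain ⟨⟨i, j⟩, hij, heq⟩ := Finset.exists_mem_eq_sup ((Finset.range s) ×ˢ (Finset.range t))
    ⟨(0, 0), by simp [hs, ht]⟩ (fun p : ℕ × ℕ =>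
      if (((p.1 + p.2).choose p.1 : F)) ≠ 0 then p.1 + p.2 + 1 else 0)
  refine ⟨i, Finset.mem_range.1 (Finset.mem_product.1 hij).1, j,
    Finset.mem_range.1 (Finset.mem_product.1 hij).2, ?_⟩
  change wedge F s t = _ at heq
  by_cases h : (((i + j).choose i : ℕ) : F) = 0
  · simp only [h, ne_eq, not_true_eq_false, if_false] at heq
    omega
  · simpa [h] using heq

end Wedge

theorem minpoly_eq_X_sub_C_pow {F A : Type*} [Field F] [Ring A] [Algebra F A] {x : A} {a : F}
    {n : ℕ} (hzero : (x - algebraMap F A a) ^ (n + 1) = 0)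
    (hne : (x - algebraMap F A a) ^ n ≠ 0) :
    minpoly F x = (X - C a) ^ (n + 1) := by
  have haeval (e : ℕ) : aeval x ((X - C a) ^ e) = (x - algebraMap F A a) ^ e := by
    simp
  obtain ⟨e, he, hassoc⟩ := (dvd_prime_pow (prime_X_sub_C a) (n + 1)).1
    (minpoly.dvd F x (by rw [haeval, hzero]))
  have hint : IsIntegral F x :=
    ⟨_, (monic_X_sub_C a).pow (n + 1), by rw [← aeval_def, haeval, hzero]⟩
  have hmin : minpoly F x = (X - C a) ^ e :=
    eq_of_monic_of_associated (minpoly.monic hint) ((monic_X_sub_C a).pow e) hassoc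
  have hxe : (x - algebraMap F A a) ^ e = 0 := by rw [← haeval, ← hmin, minpoly.aeval]
  obtain rfl : e = n + 1 := by
    by_contra h
    exact hne (pow_eq_zero_of_le (by omega) hxe)
  exact hmin

section JordanKronecker

variable {F : Type*} [Field F] {s t : ℕ}

theorem jordan_one_kronecker_jordan_one_sub_one :
    jordan F s 1 ⊗ₖ jordan F t 1 - 1 = jordan F s 0 ⊗ₖ jordan F t 1 + 1 ⊗ₖ jordan F t 0 := by
  conv_lhs => rw [jordan_eq_smul_one_add (n := s), one_smul, add_kronecker]
  nth_rewrite 1 [jordan_eq_smul_one_add (n := t)]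
  rw [one_smul, kronecker_add, one_kronecker_one]
  abel

theorem jordan_one_kronecker_jordan_one_sub_one_pow (k : ℕ) :
    (jordan F s 1 ⊗ₖ jordan F t 1 - 1) ^ k = ∑ i ∈ Finset.range (k + 1),
      k.choose i • ((jordan F s 0 ^ i) ⊗ₖ (jordan F t 1 ^ i * jordan F t 0 ^ (k - i))) := by
  have hcomm : Commute (jordan F t 1) (jordan F t 0) := by
    rw [jordan_eq_smul_one_add (n := t) 1]
    exact ((Commute.one_left _).smul_left 1).add_left (Commute.refl _)
  rw [jordan_one_kronecker_jordan_one_sub_one, kronecker_add_one_kronecker_pow _ hcomm]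

theorem jordan_one_kronecker_jordan_one_sub_one_pow_eq_zero {k : ℕ} (hk : wedge F s t ≤ k) :
    (jordan F s 1 ⊗ₖ jordan F t 1 - 1) ^ k = 0 := by
  rw [jordan_one_kronecker_jordan_one_sub_one_pow]
  refine Finset.sum_eq_zero fun i hi => ?_
  have hik : i ≤ k := Nat.lt_succ_iff.1 (Finset.mem_range.1 hi)
  by_cases his : i < s
  · by_cases hkt : k - i < t
    · have hchoose : (k.choose i : F) = 0 := by
        by_contra h
        have := le_wedge his hkt (by rwa [Nat.add_sub_cancel' hik])
        omega
      rw [← Nat.cast_smul_eq_nsmul F, hchoose, zero_smul]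
    · rw [jordan_zero_pow_eq_zero (n := t) (by omega), mul_zero, kronecker_zero, smul_zero]
  · rw [jordan_zero_pow_eq_zero (n := s) (by omega), zero_kronecker, smul_zero]

theorem jordan_one_kronecker_jordan_one_sub_one_pow_ne_zero {i j : ℕ} (hi : i < s) (hj : j < t)
    (h : ((i + j).choose i : F) ≠ 0) :
    (jordan F s 1 ⊗ₖ jordan F t 1 - 1) ^ (i + j) ≠ 0 := by
  have : NeZero t := ⟨by omega⟩
  have hcorner : (jordan F t 1 ^ i * jordan F t 0 ^ j) 0 ⟨j, hj⟩ = 1 := by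
    rw [mul_apply, Finset.sum_eq_single 0]
    · simp [jordan_pow_apply_zero_zero, jordan_zero_pow_apply]
    · intro l _ hl
      simp [jordan_zero_pow_apply, Fin.val_ne_zero_iff.mpr hl]
    · simp
  intro hzero
  have hentry := congrFun (congrFun hzero (⟨0, by omega⟩, 0)) (⟨i, hi⟩, ⟨j, hj⟩)
  rw [jordan_one_kronecker_jordan_one_sub_one_pow, Matrix.sum_apply,
    Finset.sum_eq_single i] at hentry
  · simp [jordan_zero_pow_apply, hcorner, h] at hentry
  · intro r _ hr
    simp [jordan_zero_pow_apply, Ne.symm hr]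
  · simp

end JordanKronecker

/-- Let `F` be a field and `s`, `t` positive integers. Then the minimal polynomial of the
Kronecker product `J_s(1) ⊗ J_t(1)` is `(X − 1) ^ (s ∧ t)`. -/
theorem minpoly_jordan_one_kronecker (F : Type*) [Field F] (s t : ℕ)
    (hs : 0 < s) (ht : 0 < t) :
    minpoly F (jordan F s 1 ⊗ₖ jordan F t 1) = (X - C 1) ^ wedge F s t := by
  obtain ⟨i, hi, j, hj, hchoose, hwedge⟩ := exists_wedge_eq (F := F) hs ht
  rw [hwedge]
  apply minpoly_eq_X_sub_C_pow <;> rw [map_one]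
  · exact jordan_one_kronecker_jordan_one_sub_one_pow_eq_zero hwedge.le
  · exact jordan_one_kronecker_jordan_one_sub_one_pow_ne_zero hi hj hchoose
end

section
/- Let F be a field, let α, β be nonzero elements of F, let s_1, …, s_m and t_1, …, t_n be positive integers, and set A = J_{s_1}(α) ⊕ ⋯ ⊕ J_{s_m}(α) and B = J_{t_1}(β) ⊕ ⋯ ⊕ J_{t_n}(β) (block diagonal matrices of Jordan blocks). Then the minimal polynomial of A ⊗ B is (X − αβ)^{(max_i s_i) ∧ (max_j t_j)}; here max_i s_i and max_j t_j are the indexes of α and β as eigenvalues of A and B, respectively. -/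
open Polynomial Matrix
open scoped Kronecker

namespace JordanKron

open Finset




def D (k : ℕ) (g : ℕ → ℤ) : ℤ := ∑ l ∈ Finset.range (k+1), (-1)^l * (k.choose l) * g l

lemma D_add (k : ℕ) (g h : ℕ → ℤ) : D k (fun l => g l + h l) = D k g + D k h := by
  simp [D, mul_add, Finset.sum_add_distrib]

lemma D_succ (k : ℕ) (g : ℕ → ℤ) : D (k+1) g = D k g - D k (fun l => g (l+1)) := by
  have e1 : D (k+1) g
      = ∑ l ∈ range (k+1), (-1:ℤ)^(l+1) * ((k+1).choose (l+1) : ℤ) * g (l+1) + g 0 := by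
    unfold D; rw [Finset.sum_range_succ']; simp
  have e2 : ∀ l, ((-1:ℤ))^(l+1) * ((k+1).choose (l+1):ℤ) * g (l+1)
      = -((-1)^l * (k.choose l : ℤ) * g (l+1)) + (-1)^(l+1) * (k.choose (l+1):ℤ) * g (l+1) := by
    intro l; rw [Nat.choose_succ_succ]; push_cast; ring
  have e3 : ∑ l ∈ range (k+1), (-1:ℤ)^(l+1) * (k.choose (l+1):ℤ) * g (l+1)
      = ∑ l ∈ range k, (-1:ℤ)^(l+1) * (k.choose (l+1):ℤ) * g (l+1) := by
    rw [Finset.sum_range_succ]; simp [Nat.choose_succ_self]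
  have e4 : D k g = ∑ l ∈ range k, (-1:ℤ)^(l+1)*(k.choose (l+1):ℤ)*g (l+1) + g 0 := by
    unfold D; rw [Finset.sum_range_succ']; simp
  have e5 : D k (fun l => g (l+1)) = ∑ l ∈ range (k+1), (-1:ℤ)^l * (k.choose l : ℤ) * g (l+1) := rfl
  rw [e1, Finset.sum_congr rfl (fun l _ => e2 l), Finset.sum_add_distrib,
    Finset.sum_neg_distrib, e3, e4, e5]
  ring





def G (k u v : ℕ) : ℤ := if k ≤ u + v then ((k.choose u) * (u.choose (u+v-k)) : ℤ) else 0

lemma G_rec (k u v : ℕ) :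
    G (k+1) (u+1) (v+1) = G k (u+1) v + G k u (v+1) + G k u v := by
  unfold G
  rcases Nat.lt_or_ge (u+v) k with h | h
  · rcases eq_or_lt_of_le (Nat.succ_le_of_lt h) with h' | h'
    · -- k = u + v + 1
      have h1 : k ≤ u + 1 + v := by omega
      have h2 : k ≤ u + (v + 1) := by omega
      rw [if_pos (by omega : k+1 ≤ (u+1)+(v+1)), if_pos h1, if_pos h2,
        if_neg (by omega : ¬ k ≤ u + v)]
      have e1 : (u+1)+(v+1)-(k+1) = 0 := by omega
      have e2 : u+1+v-k = 0 := by omega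
      have e3 : u+(v+1)-k = 0 := by omega
      rw [e1, e2, e3]
      simp [Nat.choose_succ_succ k u]
      ring
    · -- k > u + v + 1
      rw [if_neg (by omega), if_neg (by omega), if_neg (by omega), if_neg (by omega)]
      ring
  · -- k ≤ u + v
    rw [if_pos (by omega), if_pos (by omega), if_pos (by omega), if_pos h]
    have e1 : (u+1)+(v+1)-(k+1) = (u+v-k)+1 := by omega
    have e2 : u+1+v-k = (u+v-k)+1 := by omega
    have e3 : u+(v+1)-k = (u+v-k)+1 := by omega
    rw [e1, e2, e3, Nat.choose_succ_succ k u, Nat.choose_succ_succ (u) (u+v-k)]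
    push_cast
    ring

lemma D_choose (k : ℕ) : ∀ u v : ℕ,
    D k (fun l => ((l.choose u : ℤ)) * ((l.choose v : ℤ))) = (-1)^k * G k u v := by
  induction k with
  | zero =>
    intro u v
    unfold D G
    cases u with
    | zero => simp
    | succ u' => simp
  | succ k ih =>
    intro u v
    rw [D_succ]
    cases u with
    | zero =>
      cases v with
      | zero =>
        simp only [Nat.choose_zero_right, Nat.cast_one, mul_one]
        rw [sub_self]
        have hg : G (k+1) 0 0 = 0 := by unfold G; rw [if_neg (by omega)]
        rw [hg, mul_zero]
      | succ v' =>
        have hsucc : (fun l => (((l+1).choose 0 : ℤ)) * (((l+1).choose (v'+1) : ℤ)))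
            = fun l => ((l.choose 0 : ℤ)) * ((l.choose (v'+1) : ℤ))
              + ((l.choose 0 : ℤ)) * ((l.choose v' : ℤ)) := by
          funext l
          push_cast [Nat.choose_succ_succ, Nat.choose_zero_right]
          ring
        rw [hsucc, D_add, ih 0 (v'+1), ih 0 v']
        have : G (k+1) 0 (v'+1) = G k 0 v' := by
          unfold G
          rcases Nat.lt_or_ge v' k with h | h
          · rw [if_neg (by omega), if_neg (by omega)]
          · rw [if_pos (by omega), if_pos (by omega)]
            have : 0 + (v'+1) - (k+1) = 0 + v' - k := by omega
            rw [this]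
            simp
        rw [this]
        ring
    | succ u' =>
      cases v with
      | zero =>
        have hsucc : (fun l => (((l+1).choose (u'+1) : ℤ)) * (((l+1).choose 0 : ℤ)))
            = fun l => ((l.choose (u'+1) : ℤ)) * ((l.choose 0 : ℤ))
              + ((l.choose u' : ℤ)) * ((l.choose 0 : ℤ)) := by
          funext l
          push_cast [Nat.choose_succ_succ, Nat.choose_zero_right]
          ring
        rw [hsucc, D_add, ih (u'+1) 0, ih u' 0]
        have : G (k+1) (u'+1) 0 = G k u' 0 := by
          unfold G
          rcases Nat.lt_or_ge u' k with h | h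
          · rw [if_neg (by omega), if_neg (by omega)]
          · rw [if_pos (by omega), if_pos (by omega)]
            rcases eq_or_lt_of_le h with h' | h'
            · subst h'
              simp
            · rw [Nat.choose_eq_zero_of_lt (show k+1 < u'+1 by omega),
                Nat.choose_eq_zero_of_lt h']
              simp
        rw [this]
        ring
      | succ v' =>
        have hsucc : (fun l => (((l+1).choose (u'+1) : ℤ)) * (((l+1).choose (v'+1) : ℤ)))
            = fun l => ((l.choose (u'+1) : ℤ)) * ((l.choose (v'+1) : ℤ))
              + (((l.choose (u'+1) : ℤ)) * ((l.choose v' : ℤ))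
                + (((l.choose u' : ℤ)) * ((l.choose (v'+1) : ℤ))
                  + ((l.choose u' : ℤ)) * ((l.choose v' : ℤ)))) := by
          funext l
          rw [Nat.choose_succ_succ l u', Nat.choose_succ_succ l v']
          push_cast
          ring
        rw [hsucc, D_add, D_add, D_add, ih (u'+1) (v'+1), ih (u'+1) v', ih u' (v'+1), ih u' v',
          G_rec]
        ring



variable {F : Type*} [Field F]


variable {F : Type*} [Field F]

lemma jordan_eq (s : ℕ) (a : F) : jordan F s a = a • 1 + jordan F s 0 := by
  ext x y
  simp only [jordan, Matrix.of_apply, Matrix.add_apply, Matrix.smul_apply, Matrix.one_apply,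
    smul_eq_mul, Fin.ext_iff]
  split_ifs <;> first | ring1 | omega

lemma shift_pow_apply (s p : ℕ) : ∀ x y : Fin s,
    ((jordan F s 0) ^ p) x y = if (y:ℕ) = (x:ℕ) + p then 1 else 0 := by
  induction p with
  | zero =>
    intro x y
    rw [pow_zero, Matrix.one_apply]
    have : (x = y) ↔ ((y:ℕ) = (x:ℕ) + 0) := by rw [Fin.ext_iff]; omega
    split_ifs with h1 h2 h2 <;> first | rfl | (exact absurd (this.mp h1) h2) |
      (exact absurd (this.mpr h2) h1)
  | succ p ih =>
    intro x y
    rw [pow_succ, Matrix.mul_apply]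
    have h1 : ∀ z : Fin s, ((jordan F s 0)^p) x z * (jordan F s 0) z y
        = (fun c => if c = (x:ℕ) + p then (if (y:ℕ) = c + 1 then (1:F) else 0) else 0)
            ((z : ℕ)) := by
      intro z
      rw [ih x z]
      simp only [jordan, Matrix.of_apply]
      split_ifs <;> first | ring1 | omega
    rw [Finset.sum_congr rfl fun z _ => h1 z,
      Fin.sum_univ_eq_sum_range
        (fun c => if c = (x:ℕ) + p then (if (y:ℕ) = c + 1 then (1:F) else 0) else 0) s,
      Finset.sum_ite_eq']
    have hy := y.isLt
    split_ifs with h1 h2 h2 <;> first | rfl | (exfalso; simp only [Finset.mem_range] at h1; omega)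

lemma jordan_pow_apply (s : ℕ) (a : F) (p : ℕ) (x y : Fin s) :
    (jordan F s a ^ p) x y = if (x:ℕ) ≤ (y:ℕ) then
      (p.choose ((y:ℕ)-(x:ℕ)) : F) * a ^ (p - ((y:ℕ)-(x:ℕ))) else 0 := by
  have hc : Commute (a • (1 : Matrix (Fin s) (Fin s) F)) (jordan F s 0) :=
    (Commute.one_left _).smul_left a
  have hexp : jordan F s a ^ p
      = ∑ q ∈ Finset.range (p+1), ((p.choose q : F) * a^q) • (jordan F s 0)^(p - q) := by
    rw [jordan_eq, hc.add_pow']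
    rw [Finset.Nat.sum_antidiagonal_eq_sum_range_succ
      (fun i j => p.choose i • ((a • (1 : Matrix (Fin s) (Fin s) F))^i * (jordan F s 0)^j)) p]
    refine Finset.sum_congr rfl fun q hq => ?_
    rw [_root_.smul_pow, one_pow, smul_mul_assoc, one_mul, ← Nat.cast_smul_eq_nsmul F, smul_smul]
  rw [hexp, Matrix.sum_apply]
  simp only [Matrix.smul_apply, shift_pow_apply, smul_eq_mul, mul_ite, mul_one, mul_zero]
  by_cases hxy : (x:ℕ) ≤ (y:ℕ)
  · set d := (y:ℕ) - (x:ℕ) with hd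
    by_cases hdp : d ≤ p
    · have h2 : ∀ q ∈ Finset.range (p+1),
          (if (y:ℕ) = (x:ℕ) + (p - q) then (p.choose q : F) * a^q else 0)
            = (if q = p - d then (p.choose q : F) * a^q else 0) := by
        intro q hq
        simp only [Finset.mem_range] at hq
        refine if_congr ?_ rfl rfl
        omega
      rw [Finset.sum_congr rfl h2, Finset.sum_ite_eq', if_pos (by simp [Finset.mem_range]),
        if_pos hxy, Nat.choose_symm hdp]
    · rw [if_pos hxy, Nat.choose_eq_zero_of_lt (by omega), Nat.cast_zero, zero_mul]
      refine Finset.sum_eq_zero fun q hq => ?_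
      simp only [Finset.mem_range] at hq
      rw [if_neg (by omega)]
  · rw [if_neg hxy]
    refine Finset.sum_eq_zero fun q hq => ?_
    rw [if_neg (by omega)]

lemma sub_smul_one_pow {ι : Type*} [Fintype ι] [DecidableEq ι] (M : Matrix ι ι F) (c : F)
    (K : ℕ) : (M - c • 1)^K
      = ∑ l ∈ Finset.range (K+1), ((K.choose l : F) * (-c)^(K-l)) • M^l := by
  have hc : Commute M ((-c) • (1 : Matrix ι ι F)) := (Commute.one_right M).smul_right _
  rw [sub_eq_add_neg, ← neg_smul, hc.add_pow']
  rw [Finset.Nat.sum_antidiagonal_eq_sum_range_succ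
    (fun i j => K.choose i • (M^i * ((-c) • (1 : Matrix ι ι F))^j)) K]
  refine Finset.sum_congr rfl fun l hl => ?_
  rw [_root_.smul_pow, one_pow, mul_smul_comm, mul_one, ← Nat.cast_smul_eq_nsmul F, smul_smul]

lemma kron_pow {ι κ : Type*} [Fintype ι] [DecidableEq ι] [Fintype κ] [DecidableEq κ]
    (A : Matrix ι ι F) (B : Matrix κ κ F) (l : ℕ) : (A ⊗ₖ B)^l = (A^l) ⊗ₖ (B^l) := by
  induction l with
  | zero => simp [Matrix.one_kronecker_one]
  | succ l ih => rw [pow_succ, ih, pow_succ, pow_succ, Matrix.mul_kronecker_mul]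



lemma key_entry (α β : F) {m n : ℕ} (s : Fin m → ℕ) (t : Fin n → ℕ) (K : ℕ)
    (i : Fin m) (j : Fin n) (x x' : Fin (s i)) (y y' : Fin (t j)) :
    (((Matrix.blockDiagonal' (fun i => jordan F (s i) α)) ⊗ₖ
        (Matrix.blockDiagonal' (fun j => jordan F (t j) β)) - (α * β) • 1) ^ K)
          (⟨i,x⟩, ⟨j,y⟩) (⟨i,x'⟩, ⟨j,y'⟩)
      = if (x:ℕ) ≤ (x':ℕ) ∧ (y:ℕ) ≤ (y':ℕ) then
          α^(K-((x':ℕ)-(x:ℕ))) * β^(K-((y':ℕ)-(y:ℕ)))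
            * ((G K ((x':ℕ)-(x:ℕ)) ((y':ℕ)-(y:ℕ)) : ℤ) : F)
        else 0 := by
  rw [sub_smul_one_pow, Matrix.sum_apply]
  simp only [Matrix.smul_apply, kron_pow, ← Matrix.blockDiagonal'_pow,
    Matrix.kroneckerMap_apply, Matrix.blockDiagonal'_apply_eq, smul_eq_mul,
    Pi.pow_apply, jordan_pow_apply]
  set u := (x':ℕ) - (x:ℕ) with hu
  set v := (y':ℕ) - (y:ℕ) with hv
  by_cases hx : (x:ℕ) ≤ (x':ℕ)
  · by_cases hy : (y:ℕ) ≤ (y':ℕ)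
    · rw [if_pos ⟨hx, hy⟩]
      have hterm : ∀ l ∈ Finset.range (K+1),
          (K.choose l : F) * (-(α * β))^(K-l)
            * ((if (x:ℕ) ≤ (x':ℕ) then (l.choose u : F) * α ^ (l - u) else 0)
              * (if (y:ℕ) ≤ (y':ℕ) then (l.choose v : F) * β ^ (l - v) else 0))
          = α^(K-u) * β^(K-v) * (-1:F)^K
              * ((((-1)^l * (K.choose l : ℤ) * ((l.choose u : ℤ) * (l.choose v : ℤ))) : ℤ) : F) := by
        intro l hl
        simp only [Finset.mem_range] at hl
        rw [if_pos hx, if_pos hy]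
        rcases Nat.lt_or_ge l u with h | hul
        · rw [Nat.choose_eq_zero_of_lt h]
          push_cast
          ring
        rcases Nat.lt_or_ge l v with h | hvl
        · rw [Nat.choose_eq_zero_of_lt h]
          push_cast
          ring
        have hlK : l ≤ K := by omega
        have e1 : α^(K-u) = α^(K-l) * α^(l-u) := by rw [← pow_add]; congr 1; omega
        have e2 : β^(K-v) = β^(K-l) * β^(l-v) := by rw [← pow_add]; congr 1; omega
        have e3 : ((-1:F))^(K-l) = (-1)^K * (-1)^l := by
          have h1 : ((-1:F))^(K-l) = (-1)^(K-l+2*l) := by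
            rw [pow_add, pow_mul]
            norm_num
          rw [h1, show K-l+2*l = K + l by omega, pow_add]
        have e4 : (-(α*β))^(K-l) = ((-1:F))^(K-l) * α^(K-l) * β^(K-l) := by
          rw [neg_pow, mul_pow]
          ring
        rw [e1, e2, e4, e3]
        push_cast
        ring
      rw [Finset.sum_congr rfl hterm, ← Finset.mul_sum, ← Int.cast_sum,
        show (∑ l ∈ Finset.range (K+1),
            ((-1)^l * (K.choose l : ℤ) * ((l.choose u : ℤ) * (l.choose v : ℤ)))) =
          ((-1:ℤ))^K * G K u v from D_choose K u v]
      have h1 : ((-1:F))^K * (-1)^K = 1 := by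
        rw [← mul_pow]
        norm_num
      push_cast
      linear_combination (α^(K-u) * β^(K-v) * ((G K u v : ℤ):F)) * h1
    · rw [if_neg (by tauto)]
      refine Finset.sum_eq_zero fun l hl => ?_
      rw [if_neg hy]
      ring
  · rw [if_neg (by tauto)]
    refine Finset.sum_eq_zero fun l hl => ?_
    rw [if_neg hx]
    ring

lemma key_offblock (α β : F) {m n : ℕ} (s : Fin m → ℕ) (t : Fin n → ℕ) (K : ℕ)
    (i i' : Fin m) (j j' : Fin n) (x : Fin (s i)) (x' : Fin (s i')) (y : Fin (t j))
    (y' : Fin (t j')) (h : i ≠ i' ∨ j ≠ j') :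
    (((Matrix.blockDiagonal' (fun i => jordan F (s i) α)) ⊗ₖ
        (Matrix.blockDiagonal' (fun j => jordan F (t j) β)) - (α * β) • 1) ^ K)
          (⟨i,x⟩, ⟨j,y⟩) (⟨i',x'⟩, ⟨j',y'⟩) = 0 := by
  rw [sub_smul_one_pow, Matrix.sum_apply]
  refine Finset.sum_eq_zero fun l hl => ?_
  simp only [Matrix.smul_apply, kron_pow, ← Matrix.blockDiagonal'_pow,
    Matrix.kroneckerMap_apply, smul_eq_mul]
  rcases h with h | h
  · rw [Matrix.blockDiagonal'_apply_ne _ _ _ h]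
    ring
  · rw [Matrix.blockDiagonal'_apply_ne _ _ _ h]
    ring

lemma minpoly_of_nilpotent {ι : Type*} [Fintype ι] [DecidableEq ι] (M : Matrix ι ι F) (c : F)
    (k : ℕ) (hk : 0 < k) (h0 : (M - c • 1)^k = 0) (h1 : (M - c • 1)^(k-1) ≠ 0) :
    minpoly F M = (X - C c)^k := by
  have hae : ∀ j : ℕ, aeval M ((X - C c)^j) = (M - c • 1)^j := by
    intro j
    rw [map_pow, map_sub, aeval_X, aeval_C, Algebra.algebraMap_eq_smul_one]
  have hann : aeval M ((X - C c)^k) = 0 := by rw [hae]; exact h0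
  have hdvd : minpoly F M ∣ (X - C c)^k := minpoly.dvd F M hann
  obtain ⟨l, hlk, hassoc⟩ := (dvd_prime_pow (Polynomial.prime_X_sub_C c) k).mp hdvd
  have hint : IsIntegral F M := ⟨(X - C c)^k, (monic_X_sub_C c).pow k, hann⟩
  have heq : minpoly F M = (X - C c)^l :=
    Polynomial.eq_of_monic_of_associated (minpoly.monic hint) ((monic_X_sub_C c).pow l) hassoc
  have hlk' : l = k := by
    by_contra hne
    have hll : l ≤ k - 1 := by omega
    have hz : (M - c • 1)^l = 0 := by
      have := minpoly.aeval F M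
      rw [heq, hae] at this
      exact this
    have : (M - c • 1)^(k-1) = 0 := by
      rw [show k-1 = l + (k-1-l) by omega, pow_add, hz, zero_mul]
    exact h1 this
  rw [heq, hlk']


lemma le_wedge (F : Type*) [Field F] {S T u v : ℕ} (hu : u < S) (hv : v < T)
    (hC : (((u+v).choose u : F)) ≠ 0) : u + v + 1 ≤ wedge F S T := by
  classical
  have hmem : (u,v) ∈ (Finset.range S) ×ˢ (Finset.range T) := by
    simp [Finset.mem_product, Finset.mem_range, hu, hv]
  unfold wedge
  refine le_trans ?_ (Finset.le_sup hmem)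
  rw [if_pos hC]

lemma wedge_attained (F : Type*) [Field F] {S T : ℕ} (hS : 0 < S) (hT : 0 < T) :
    ∃ u v : ℕ, u < S ∧ v < T ∧ wedge F S T = u + v + 1 ∧ (((u+v).choose u : F)) ≠ 0 := by
  classical
  have h1 : 1 ≤ wedge F S T := le_wedge F hS hT (by simp)
  obtain ⟨p, hp, hval⟩ := Finset.exists_mem_eq_sup ((Finset.range S) ×ˢ (Finset.range T))
    ⟨(0,0), by simp [Finset.mem_product, Finset.mem_range, hS, hT]⟩
    (fun p : ℕ × ℕ => if (((p.1 + p.2).choose p.1 : F)) ≠ 0 then p.1 + p.2 + 1 else 0)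
  simp only [Finset.mem_product, Finset.mem_range] at hp
  have hval' : wedge F S T
      = if (((p.1 + p.2).choose p.1 : F)) ≠ 0 then p.1 + p.2 + 1 else 0 := hval
  by_cases hC : (((p.1 + p.2).choose p.1 : F)) ≠ 0
  · exact ⟨p.1, p.2, hp.1, hp.2, by rw [hval', if_pos hC], hC⟩
  · rw [hval', if_neg hC] at h1
    omega

end JordanKron

/-- Let `F` be a field, `α`, `β` nonzero elements of `F`, `s₁, …, s_m` and `t₁, …, t_n`
positive integers, `A = J_{s₁}(α) ⊕ ⋯ ⊕ J_{s_m}(α)` and `B = J_{t₁}(β) ⊕ ⋯ ⊕ J_{t_n}(β)`.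
Then the minimal polynomial of `A ⊗ B` is `(X − αβ) ^ ((max_i s_i) ∧ (max_j t_j))`. -/

theorem minpoly_jordanSum_kronecker (F : Type*) [Field F] (α β : F) (hα : α ≠ 0) (hβ : β ≠ 0)
    (m n : ℕ) (hm : 0 < m) (hn : 0 < n) (s : Fin m → ℕ) (t : Fin n → ℕ)
    (hs : ∀ i, 0 < s i) (ht : ∀ j, 0 < t j) :
    minpoly F ((Matrix.blockDiagonal' (fun i => jordan F (s i) α)) ⊗ₖ
        (Matrix.blockDiagonal' (fun j => jordan F (t j) β))) =
      (X - C (α * β)) ^ wedge F (Finset.univ.sup s) (Finset.univ.sup t) := by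
  classical
  have hSle : ∀ i, s i ≤ Finset.univ.sup s := fun i => Finset.le_sup (Finset.mem_univ i)
  have hTle : ∀ j, t j ≤ Finset.univ.sup t := fun j => Finset.le_sup (Finset.mem_univ j)
  set S := Finset.univ.sup s with hS
  set T := Finset.univ.sup t with hT
  set k := wedge F S T with hk
  have hSpos : 0 < S := lt_of_lt_of_le (hs ⟨0,hm⟩) (hSle ⟨0,hm⟩)
  have hTpos : 0 < T := lt_of_lt_of_le (ht ⟨0,hn⟩) (hTle ⟨0,hn⟩)
  have hk1 : 1 ≤ k := JordanKron.le_wedge F hSpos hTpos (by simp)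
  apply JordanKron.minpoly_of_nilpotent _ _ k (by omega)
  · ext ⟨⟨i,x⟩,⟨j,y⟩⟩ ⟨⟨i',x'⟩,⟨j',y'⟩⟩
    rw [Matrix.zero_apply]
    by_cases hii : i = i'
    · subst hii
      by_cases hjj : j = j'
      · subst hjj
        rw [JordanKron.key_entry]
        split_ifs with hcond
        · obtain ⟨hx, hy⟩ := hcond
          suffices hG : ((JordanKron.G k ((x':ℕ) - (x:ℕ)) ((y':ℕ) - (y:ℕ)) : ℤ) : F) = 0 by
            rw [hG, mul_zero]
          unfold JordanKron.G
          split_ifs with hkuv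
          · push_cast
            have hcu : ((k.choose ((x':ℕ) - (x:ℕ))) : F) = 0 := by
              by_contra hC0
              have huk : (x':ℕ) - (x:ℕ) ≤ k := by
                by_contra h
                rw [Nat.choose_eq_zero_of_lt (by omega)] at hC0
                simp at hC0
              have hxs : (x':ℕ) < s i := x'.isLt
              have hys : (y':ℕ) < t j := y'.isLt
              have hsS : s i ≤ S := hSle i
              have htT : t j ≤ T := hTle j
              have hult : (x':ℕ) - (x:ℕ) < S := by omega
              have hvlt : k - ((x':ℕ) - (x:ℕ)) < T := by omega
              have hle := JordanKron.le_wedge F hult hvlt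
                (by rw [show ((x':ℕ) - (x:ℕ)) + (k - ((x':ℕ) - (x:ℕ))) = k by omega]; exact hC0)
              omega
            rw [hcu, zero_mul]
          · exact Int.cast_zero
        · rfl
      · rw [JordanKron.key_offblock α β s t k i i j j' x x' y y' (Or.inr hjj)]
    · rw [JordanKron.key_offblock α β s t k i i' j j' x x' y y' (Or.inl hii)]
  · obtain ⟨u, v, hu, hv, hkval, hC⟩ := JordanKron.wedge_attained F (S := S) (T := T) hSpos hTpos
    obtain ⟨i0, -, hSi0⟩ := Finset.exists_mem_eq_sup (Finset.univ : Finset (Fin m))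
      ⟨⟨0,hm⟩, Finset.mem_univ _⟩ s
    obtain ⟨j0, -, hTj0⟩ := Finset.exists_mem_eq_sup (Finset.univ : Finset (Fin n))
      ⟨⟨0,hn⟩, Finset.mem_univ _⟩ t
    intro hzero
    have hx' : u < s i0 := by rw [← hSi0]; exact hu
    have hy' : v < t j0 := by rw [← hTj0]; exact hv
    have hEntry := JordanKron.key_entry α β s t (k-1) i0 j0
      ⟨0, hs i0⟩ ⟨u, hx'⟩ ⟨0, ht j0⟩ ⟨v, hy'⟩
    rw [hzero, Matrix.zero_apply] at hEntry
    simp only [Nat.sub_zero] at hEntry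
    rw [if_pos ⟨Nat.zero_le _, Nat.zero_le _⟩] at hEntry
    rw [show k - 1 = u + v by omega] at hEntry
    have hG : JordanKron.G (u+v) u v = ((u+v).choose u : ℤ) := by
      unfold JordanKron.G
      rw [if_pos le_rfl]
      simp
    rw [hG, show u + v - u = v by omega, show u + v - v = u by omega] at hEntry
    refine absurd hEntry.symm ?_
    push_cast
    exact mul_ne_zero (mul_ne_zero (pow_ne_zero _ hα) (pow_ne_zero _ hβ)) hC
end

section
/- Let F be a field and let P₁, P₂ be monic polynomials over F of degrees ≥ 1, with companion matrices C_{P₁} and C_{P₂}. Then L(P₁) · L(P₂) = L(P), where the product on the left is the product of submodules of the sequence algebra ℕ → F and P = minpoly F (C_{P₁} ⊗ C_{P₂}) is the minimal polynomial of the Kronecker product of the companion matrices. -/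
open Polynomial Matrix
open scoped Kronecker

/-- `LinRec F P` is `L(P)`: for a polynomial `P` of degree `n`, the `F`-subspace of the
algebra of sequences `ℕ → F` consisting of the sequences `a` satisfying the linear
recurrence `∑_{i ≤ n} P.coeff i * a (k + i) = 0` for all `k ≥ 0` (for monic `P`, this is
`a (k + n) + c_{n-1} a (k + n - 1) + ⋯ + c₀ a k = 0`). -/
def LinRec (F : Type*) [Field F] (P : Polynomial F) : Submodule F (ℕ → F) where
  carrier := {a | ∀ k : ℕ, ∑ i ∈ Finset.range (P.natDegree + 1), P.coeff i * a (k + i) = 0}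
  add_mem' := by
    intro a b ha hb k
    simp only [Pi.add_apply, mul_add, Finset.sum_add_distrib, ha k, hb k, add_zero]
  zero_mem' := by
    intro k
    simp
  smul_mem' := by
    intro c a ha k
    simp only [Pi.smul_apply, smul_eq_mul]
    calc ∑ i ∈ Finset.range (P.natDegree + 1), P.coeff i * (c * a (k + i))
        = c * ∑ i ∈ Finset.range (P.natDegree + 1), P.coeff i * a (k + i) := by
          rw [Finset.mul_sum]; exact Finset.sum_congr rfl fun i _ => by ring
      _ = 0 := by rw [ha k, mul_zero]

/-- The companion matrix of a polynomial `P` of degree `n`: the `n × n` matrix whose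
`(i, n−1)` entry is `−P.coeff i` for `0 ≤ i ≤ n−1`, whose `(i+1, i)` entry is `1` for
`0 ≤ i ≤ n−2`, and whose other entries are `0`. -/
def companion {F : Type*} [Field F] (P : Polynomial F) :
    Matrix (Fin P.natDegree) (Fin P.natDegree) F :=
  Matrix.of fun i j =>
    if (j : ℕ) = P.natDegree - 1 then -P.coeff i
    else if (i : ℕ) = (j : ℕ) + 1 then 1 else 0

/-!
Let `C` be the companion matrix of `P` and `e₀` the first standard basis vector. Since
`Cⁱ e₀ = eᵢ` for `i < deg P` and `P(C) e₀ = 0`, the sequences in `L(P)` are exactly the sequences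
`k ↦ w ⬝ (Cᵏ e₀)`. The product of two such sequences is `k ↦ (w₁ ⊗ w₂) ⬝ ((C₁ ⊗ C₂)ᵏ (e₀ ⊗ e₀))`,
so `L(P₁) · L(P₂)` consists of the sequences generated in this way by `M = C₁ ⊗ C₂` and
`e₀ ⊗ e₀`. This vector is separating for `F[M]`: each basis vector `eᵢ ⊗ eⱼ` is its image under
`C₁ⁱ ⊗ C₂ʲ`, which commutes with `M`. Hence the vectors `Mⁱ (e₀ ⊗ e₀)`, `i < deg (minpoly M)`, are
linearly independent, and the generated sequences are exactly the solutions of the recurrence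
given by `minpoly M`.
-/

section

variable {F : Type*} [Field F]

def Polynomial.toLinearRecurrence (Q : F[X]) : LinearRecurrence F :=
  ⟨Q.natDegree, fun i => -Q.coeff i⟩

theorem Polynomial.Monic.linRec_eq_solSpace {Q : F[X]} (hQ : Q.Monic) :
    LinRec F Q = Q.toLinearRecurrence.solSpace := by
  ext a
  refine forall_congr' fun k => ?_
  rw [Finset.sum_range_succ, hQ.coeff_natDegree, one_mul, ← Fin.sum_univ_eq_sum_range]
  simp only [Polynomial.toLinearRecurrence, neg_mul, Finset.sum_neg_distrib]
  exact add_eq_zero_iff_eq_neg'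

theorem eq_of_mem_linRec_of_forall_lt {Q : F[X]} (hQ : Q.Monic) {a b : ℕ → F}
    (ha : a ∈ LinRec F Q) (hb : b ∈ LinRec F Q) (h : ∀ k < Q.natDegree, a k = b k) : a = b := by
  rw [hQ.linRec_eq_solSpace] at ha hb
  exact (LinearRecurrence.eq_iff_eqOn_range_order _ a b ha hb).2 fun k hk =>
    h k (Finset.mem_range.1 hk)

theorem exists_dotProduct_eq_of_linearIndependent {ι : Type*} [Fintype ι] {d : ℕ}
    {x : Fin d → ι → F} (hx : LinearIndependent F x) (t : Fin d → F) :
    ∃ w : ι → F, ∀ i, x i ⬝ᵥ w = t i := by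
  have hrank : (Matrix.of x).rank = d := by
    rw [rank_eq_finrank_span_row]
    exact (finrank_span_eq_card hx).trans (Fintype.card_fin d)
  obtain ⟨w, hw⟩ : t ∈ LinearMap.range (Matrix.of x).mulVecLin := by
    rw [Submodule.eq_top_of_finrank_eq (S := LinearMap.range (Matrix.of x).mulVecLin)
      (by rw [← Matrix.rank, hrank, Module.finrank_fin_fun])]
    trivial
  exact ⟨w, congrFun hw⟩

end

theorem Pi.single_prod_eq_mul {R ι κ : Type*} [MulZeroOneClass R] [DecidableEq ι]
    [DecidableEq κ] (i : ι) (j : κ) :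
    (Pi.single (i, j) 1 : ι × κ → R) =
      fun p => (Pi.single i 1 : ι → R) p.1 * (Pi.single j 1 : κ → R) p.2 := by
  ext ⟨i', j'⟩
  by_cases hi : i' = i <;> by_cases hj : j' = j <;> simp [hi, hj]

namespace Matrix

section CommSemiring

variable {R ι κ : Type*} [CommSemiring R] [Fintype ι] [Fintype κ]

theorem kronecker_mulVec_mul (A : Matrix ι ι R) (B : Matrix κ κ R) (u : ι → R) (v : κ → R) :
    (A ⊗ₖ B) *ᵥ (fun p => u p.1 * v p.2) = fun p => (A *ᵥ u) p.1 * (B *ᵥ v) p.2 := by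
  ext ⟨i, j⟩
  simp [mulVec, dotProduct, Fintype.sum_prod_type, Finset.sum_mul_sum, mul_mul_mul_comm]

theorem _root_.Commute.kronecker {A₁ A₂ : Matrix ι ι R} {B₁ B₂ : Matrix κ κ R}
    (hA : Commute A₁ A₂) (hB : Commute B₁ B₂) : Commute (A₁ ⊗ₖ B₁) (A₂ ⊗ₖ B₂) := by
  rw [commute_iff_eq, ← mul_kronecker_mul, ← mul_kronecker_mul, hA.eq, hB.eq]

theorem kronecker_pow [DecidableEq ι] [DecidableEq κ] (A : Matrix ι ι R) (B : Matrix κ κ R)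
    (k : ℕ) : (A ⊗ₖ B) ^ k = (A ^ k) ⊗ₖ (B ^ k) := by
  induction k with
  | zero => simp
  | succ k ih => rw [pow_succ, pow_succ, pow_succ, ih, mul_kronecker_mul]

end CommSemiring

variable {F ι κ : Type*} [Field F] [Fintype ι] [DecidableEq ι] [Fintype κ] [DecidableEq κ]

def powSeq (M : Matrix ι ι F) (v : ι → F) : (ι → F) →ₗ[F] ℕ → F where
  toFun w k := w ⬝ᵥ (M ^ k *ᵥ v)
  map_add' _ _ := funext fun _ => add_dotProduct _ _ _
  map_smul' _ _ := funext fun _ => smul_dotProduct _ _ _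

@[simp]
theorem powSeq_apply (M : Matrix ι ι F) (v w : ι → F) (k : ℕ) :
    powSeq M v w k = w ⬝ᵥ (M ^ k *ᵥ v) := rfl

theorem powSeq_mem_linRec {M : Matrix ι ι F} {v : ι → F} {Q : F[X]}
    (hv : aeval M Q *ᵥ v = 0) (w : ι → F) : powSeq M v w ∈ LinRec F Q := by
  intro k
  have : M ^ k *ᵥ (aeval M Q *ᵥ v) =
      ∑ i ∈ Finset.range (Q.natDegree + 1), Q.coeff i • (M ^ (k + i) *ᵥ v) := by
    simp [aeval_eq_sum_range, sum_mulVec, mulVec_sum, smul_mulVec, mulVec_smul, mulVec_mulVec,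
      pow_add]
  rw [hv, mulVec_zero] at this
  simpa [dotProduct_sum] using congrArg (w ⬝ᵥ ·) this.symm

theorem range_powSeq_eq_linRec {M : Matrix ι ι F} {v : ι → F} {Q : F[X]} (hQ : Q.Monic)
    (hv : aeval M Q *ᵥ v = 0)
    (hind : LinearIndependent F fun i : Fin Q.natDegree => M ^ (i : ℕ) *ᵥ v) :
    LinearMap.range (powSeq M v) = LinRec F Q := by
  refine le_antisymm ?_ fun a ha => ?_
  · rintro _ ⟨w, rfl⟩
    exact powSeq_mem_linRec hv w
  obtain ⟨w, hw⟩ := exists_dotProduct_eq_of_linearIndependent hind fun i => a i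
  refine ⟨w, eq_of_mem_linRec_of_forall_lt hQ (powSeq_mem_linRec hv w) ha fun k hk => ?_⟩
  rw [powSeq_apply, dotProduct_comm]
  exact hw ⟨k, hk⟩

def IsSeparatingVector (M : Matrix ι ι F) (v : ι → F) : Prop :=
  ∀ R : F[X], aeval M R *ᵥ v = 0 → aeval M R = 0

theorem isSeparatingVector_of_forall_exists_commute {M : Matrix ι ι F} {v : ι → F}
    (h : ∀ q, ∃ N : Matrix ι ι F, Commute M N ∧ N *ᵥ v = Pi.single q 1) :
    IsSeparatingVector M v := by
  intro R hR
  ext p q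
  obtain ⟨N, hMN, hN⟩ := h q
  have hcomm : Commute (aeval M R) N := by
    rw [aeval_eq_sum_range]
    exact Commute.sum_left _ _ _ fun i _ => (hMN.pow_left i).smul_left _
  have hcol : aeval M R *ᵥ Pi.single q 1 = 0 := by
    rw [← hN, mulVec_mulVec, hcomm.eq, ← mulVec_mulVec, hR, mulVec_zero]
  simpa using congrFun hcol p

theorem IsSeparatingVector.linearIndependent {M : Matrix ι ι F} {v : ι → F}
    (hv : IsSeparatingVector M v) :
    LinearIndependent F fun i : Fin (minpoly F M).natDegree => M ^ (i : ℕ) *ᵥ v := by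
  refine (linearIndependent_pow M).map (f := (mulVecBilin F F).flip v) ?_
  rw [Submodule.disjoint_def]
  intro A hA hAv
  obtain ⟨R, rfl⟩ : A ∈ (aeval (R := F) M).range := by
    rw [← Algebra.adjoin_singleton_eq_range_aeval]
    change A ∈ Subalgebra.toSubmodule (Algebra.adjoin F {M})
    refine Submodule.span_le.2 ?_ hA
    rintro _ ⟨i, rfl⟩
    exact pow_mem (Algebra.self_mem_adjoin_singleton F M) _
  exact hv R hAv

theorem IsSeparatingVector.range_powSeq {M : Matrix ι ι F} {v : ι → F}
    (hv : IsSeparatingVector M v) :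
    LinearMap.range (powSeq M v) = LinRec F (minpoly F M) :=
  range_powSeq_eq_linRec (minpoly.monic (Matrix.isIntegral M))
    (by rw [minpoly.aeval, zero_mulVec]) hv.linearIndependent

theorem powSeq_kronecker (M₁ : Matrix ι ι F) (M₂ : Matrix κ κ F) (v₁ w₁ : ι → F)
    (v₂ w₂ : κ → F) :
    powSeq (M₁ ⊗ₖ M₂) (fun p => v₁ p.1 * v₂ p.2) (fun p => w₁ p.1 * w₂ p.2) =
      powSeq M₁ v₁ w₁ * powSeq M₂ v₂ w₂ := by
  ext k
  simp only [powSeq_apply, kronecker_pow, kronecker_mulVec_mul, Pi.mul_apply]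
  simp [dotProduct, Fintype.sum_prod_type, Finset.sum_mul_sum, mul_mul_mul_comm]

theorem range_powSeq_mul_range_powSeq (M₁ : Matrix ι ι F) (M₂ : Matrix κ κ F) (v₁ : ι → F)
    (v₂ : κ → F) :
    LinearMap.range (powSeq M₁ v₁) * LinearMap.range (powSeq M₂ v₂) =
      LinearMap.range (powSeq (M₁ ⊗ₖ M₂) fun p => v₁ p.1 * v₂ p.2) := by
  refine le_antisymm (Submodule.mul_le.2 ?_) ?_
  · rintro _ ⟨w₁, rfl⟩ _ ⟨w₂, rfl⟩
    exact ⟨_, powSeq_kronecker M₁ M₂ v₁ w₁ v₂ w₂⟩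
  · rw [LinearMap.range_eq_map, ← (Pi.basisFun F (ι × κ)).span_eq, Submodule.map_span_le]
    rintro _ ⟨⟨i, j⟩, rfl⟩
    rw [Pi.basisFun_apply, Pi.single_prod_eq_mul, powSeq_kronecker]
    exact Submodule.mul_mem_mul (LinearMap.mem_range_self _ _) (LinearMap.mem_range_self _ _)

end Matrix

section Companion

variable {F : Type*} [Field F] {P : F[X]}

theorem companion_pow_mulVec_single (hd : 1 ≤ P.natDegree) {i : ℕ} (hi : i < P.natDegree) :
    companion P ^ i *ᵥ Pi.single ⟨0, hd⟩ 1 = Pi.single ⟨i, hi⟩ 1 := by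
  induction i with
  | zero => rw [pow_zero, one_mulVec]
  | succ i ih =>
    rw [pow_succ', ← mulVec_mulVec, ih (by omega), mulVec_single_one]
    ext r
    simp [companion, Pi.single_apply, Fin.ext_iff, show i ≠ P.natDegree - 1 by omega]

theorem aeval_companion_mulVec_single (hP : P.Monic) (hd : 1 ≤ P.natDegree) :
    aeval (companion P) P *ᵥ Pi.single ⟨0, hd⟩ 1 = 0 := by
  have hlow : ∑ i ∈ Finset.range P.natDegree,
      (P.coeff i • companion P ^ i) *ᵥ Pi.single ⟨0, hd⟩ 1 =
        fun r : Fin P.natDegree => P.coeff r := by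
    rw [← Fin.sum_univ_eq_sum_range (fun i => (P.coeff i • companion P ^ i) *ᵥ _)]
    simp_rw [smul_mulVec, companion_pow_mulVec_single hd (Fin.is_lt _)]
    ext r
    simp [Pi.single_apply]
  have htop : companion P ^ P.natDegree *ᵥ Pi.single ⟨0, hd⟩ 1 =
      -fun r : Fin P.natDegree => P.coeff r := by
    obtain ⟨m, hm⟩ : ∃ m, P.natDegree = m + 1 := ⟨_, (Nat.sub_add_cancel hd).symm⟩
    rw [show companion P ^ P.natDegree = companion P * companion P ^ m by rw [← pow_succ', ← hm],
      ← mulVec_mulVec, companion_pow_mulVec_single hd (by omega), mulVec_single_one]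
    ext r
    simp [companion, hm]
  rw [aeval_eq_sum_range, sum_mulVec, Finset.sum_range_succ, hlow, hP.coeff_natDegree, one_smul,
    htop, add_neg_cancel]

theorem linRec_eq_range_powSeq_companion (hP : P.Monic) (hd : 1 ≤ P.natDegree) :
    LinRec F P = LinearMap.range (powSeq (companion P) (Pi.single ⟨0, hd⟩ 1)) := by
  have hbasis : (fun i : Fin P.natDegree => companion P ^ (i : ℕ) *ᵥ Pi.single ⟨0, hd⟩ 1) =
      Pi.basisFun F _ :=
    funext fun i => by rw [companion_pow_mulVec_single hd i.is_lt, Pi.basisFun_apply]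
  refine (range_powSeq_eq_linRec hP (aeval_companion_mulVec_single hP hd) ?_).symm
  exact hbasis ▸ (Pi.basisFun F _).linearIndependent

theorem isSeparatingVector_kronecker_companion {P₁ P₂ : F[X]} (hd₁ : 1 ≤ P₁.natDegree)
    (hd₂ : 1 ≤ P₂.natDegree) :
    IsSeparatingVector (companion P₁ ⊗ₖ companion P₂) fun p =>
      (Pi.single ⟨0, hd₁⟩ 1 : Fin P₁.natDegree → F) p.1 *
        (Pi.single ⟨0, hd₂⟩ 1 : Fin P₂.natDegree → F) p.2 := by
  refine isSeparatingVector_of_forall_exists_commute fun ⟨q₁, q₂⟩ =>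
    ⟨(companion P₁ ^ (q₁ : ℕ)) ⊗ₖ (companion P₂ ^ (q₂ : ℕ)),
      (Commute.self_pow _ _).kronecker (Commute.self_pow _ _), ?_⟩
  rw [kronecker_mulVec_mul, companion_pow_mulVec_single hd₁ q₁.is_lt,
    companion_pow_mulVec_single hd₂ q₂.is_lt, Pi.single_prod_eq_mul]

end Companion

/-- Let `F` be a field and `P₁`, `P₂` monic polynomials over `F` of degrees `≥ 1`, with
companion matrices `C_{P₁}` and `C_{P₂}`.  Then `L(P₁) · L(P₂) = L(P)` where
`P = minpoly F (C_{P₁} ⊗ C_{P₂})` is the minimal polynomial of the Kronecker product of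
the companion matrices. -/
theorem linRec_mul_linRec (F : Type*) [Field F] (P₁ P₂ : Polynomial F)
    (h₁ : P₁.Monic) (h₂ : P₂.Monic) (hd₁ : 1 ≤ P₁.natDegree) (hd₂ : 1 ≤ P₂.natDegree) :
    LinRec F P₁ * LinRec F P₂ = LinRec F (minpoly F (companion P₁ ⊗ₖ companion P₂)) := by
  rw [linRec_eq_range_powSeq_companion h₁ hd₁, linRec_eq_range_powSeq_companion h₂ hd₂,
    range_powSeq_mul_range_powSeq, (isSeparatingVector_kronecker_companion hd₁ hd₂).range_powSeq]
end

section
/- With spectral projections π_0, π_1, …, π_p of A as in the context, for every t ∈ ℂ the matrix exponential satisfies exp(tA) = Σ_{i=0}^{t₀−1} (t^i/i!)·A^i·π_0 + Σ_{j=1}^p Σ_{i=0}^{t_j−1} (t^i/i!)·e^{tλ_j}·(A − λ_j I)^i·π_j. -/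
/-!
Split `exp (τA) = exp (τA) (π₀ + ∑ π_j)`. Since scalars are central,
`exp (τA) = e^{τλ_j} exp (τ(A - λ_j))`, and because `(A - λ_j)^{t_j} π_j = 0` the exponential
series of `τ(A - λ_j)`, multiplied by `π_j`, stops after `t_j` terms.
-/

namespace NormedSpace

variable {𝕂 𝔸 : Type*} [RCLike 𝕂] [NormedRing 𝔸] [NormedAlgebra 𝕂 𝔸] [CompleteSpace 𝔸]

theorem exp_smul_mul_eq_sum_range_of_pow_mul_eq_zero {B P : 𝔸} {m : ℕ} (h : B ^ m * P = 0)
    (τ : 𝕂) : exp (τ • B) * P = ∑ i ∈ Finset.range m, (τ ^ i / i.factorial) • (B ^ i * P) := by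
  have hvanish : ∀ n ∉ Finset.range m, (n.factorial⁻¹ : 𝕂) • (τ • B) ^ n * P = 0 := by
    intro n hn
    obtain ⟨k, rfl⟩ := Nat.exists_eq_add_of_le' (not_lt.mp (Finset.mem_range.not.mp hn))
    rw [smul_mul_assoc, smul_pow, smul_mul_assoc, pow_add B, mul_assoc, h, mul_zero,
      smul_zero, smul_zero]
  rw [exp_eq_tsum 𝕂, ← (expSeries_summable' (τ • B)).tsum_mul_right P, tsum_eq_sum hvanish]
  refine Finset.sum_congr rfl fun i _ => ?_
  rw [smul_pow, smul_smul, smul_mul_assoc, div_eq_inv_mul]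

theorem exp_algebraMap_add (c : 𝕂) (x : 𝔸) :
    exp (algebraMap 𝕂 𝔸 c + x) = exp c • exp x := by
  have hball (y : 𝔸) : y ∈ Metric.eball (0 : 𝔸) (expSeries 𝕂 𝔸).radius :=
    (expSeries_radius_eq_top 𝕂 𝔸).symm ▸ edist_lt_top _ _
  rw [exp_add_of_commute_of_mem_ball (Algebra.commutes c x) (hball _) (hball _),
    ← algebraMap_exp_comm, Algebra.smul_def]

theorem exp_smul_mul_eq_sum_range_of_sub_pow_mul_eq_zero {B P : 𝔸} {μ : 𝕂} {m : ℕ}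
    (h : (B - μ • 1) ^ m * P = 0) (τ : 𝕂) :
    exp (τ • B) * P =
      ∑ i ∈ Finset.range m, (τ ^ i / i.factorial * exp (τ * μ)) • ((B - μ • 1) ^ i * P) := by
  have hsplit : τ • B = algebraMap 𝕂 𝔸 (τ * μ) + τ • (B - μ • 1) := by
    rw [Algebra.algebraMap_eq_smul_one, smul_sub, smul_smul, add_sub_cancel]
  rw [hsplit, exp_algebraMap_add, smul_mul_assoc, exp_smul_mul_eq_sum_range_of_pow_mul_eq_zero h,
    Finset.smul_sum]
  simp_rw [smul_smul, mul_comm]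

end NormedSpace

open Polynomial Matrix

theorem exp_smul_eq_spectral_general (q : ℕ) (p : ℕ)
    (A : Matrix (Fin q) (Fin q) ℂ)
    (lam : Fin p → ℂ)
    (t₀ : ℕ) (t : Fin p → ℕ)
    (π₀ : Matrix (Fin q) (Fin q) ℂ) (π : Fin p → Matrix (Fin q) (Fin q) ℂ)
    (hsum : π₀ + ∑ j, π j = 1)
    (hnil : A ^ t₀ * π₀ = 0)
    (hjord : ∀ j, (A - lam j • 1) ^ t j * π j = 0) :
    ∀ τ : ℂ, NormedSpace.exp (τ • A) =
      ∑ i ∈ Finset.range t₀, (τ ^ i / (i.factorial : ℂ)) • (A ^ i * π₀) +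
      ∑ j, ∑ i ∈ Finset.range (t j),
        ((τ ^ i / (i.factorial : ℂ)) * Complex.exp (τ * lam j)) • ((A - lam j • 1) ^ i * π j) := by
  intro τ
  -- `exp` only depends on the topology, so any submultiplicative norm may be chosen here.
  let _ : NormedRing (Matrix (Fin q) (Fin q) ℂ) := Matrix.linftyOpNormedRing
  let _ : NormedAlgebra ℂ (Matrix (Fin q) (Fin q) ℂ) := Matrix.linftyOpNormedAlgebra
  calc NormedSpace.exp (τ • A) = NormedSpace.exp (τ • A) * (π₀ + ∑ j, π j) := by
        rw [hsum, mul_one]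
    _ = _ := by
        rw [mul_add, Finset.mul_sum, Complex.exp_eq_exp_ℂ]
        exact congrArg₂ (· + ·) (NormedSpace.exp_smul_mul_eq_sum_range_of_pow_mul_eq_zero hnil τ)
          (Finset.sum_congr rfl fun j _ =>
            NormedSpace.exp_smul_mul_eq_sum_range_of_sub_pow_mul_eq_zero (hjord j) τ)

/-- Let `A` be a `q × q` complex matrix with minimal polynomial
`X^{t₀} ∏_j (X − λ_j)^{t_j}` (the `λ_j` distinct and nonzero, `t_j ≥ 1`), and let
`π₀, π₁, …, π_p` be its spectral projections at `0, λ₁, …, λ_p`.  Then for every `t ∈ ℂ`,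
`exp(tA) = ∑_{i<t₀} (t^i/i!) A^i π₀ + ∑_j ∑_{i<t_j} (t^i/i!) e^{tλ_j} (A − λ_j I)^i π_j`. -/
theorem exp_smul_eq_spectral (q : ℕ) (hq : 0 < q) (p : ℕ)
    (A : Matrix (Fin q) (Fin q) ℂ)
    (lam : Fin p → ℂ) (hinj : Function.Injective lam) (hne : ∀ j, lam j ≠ 0)
    (t₀ : ℕ) (t : Fin p → ℕ) (ht : ∀ j, 1 ≤ t j)
    (hmin : minpoly ℂ A = X ^ t₀ * ∏ j, (X - C (lam j)) ^ t j)
    (π₀ : Matrix (Fin q) (Fin q) ℂ) (π : Fin p → Matrix (Fin q) (Fin q) ℂ)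
    (hsum : π₀ + ∑ j, π j = 1)
    (horth₁ : ∀ j, π₀ * π j = 0) (horth₂ : ∀ j, π j * π₀ = 0)
    (horth : ∀ j j', j ≠ j' → π j * π j' = 0)
    (hidem₀ : π₀ * π₀ = π₀) (hidem : ∀ j, π j * π j = π j)
    (hcomm₀ : A * π₀ = π₀ * A) (hcomm : ∀ j, A * π j = π j * A)
    (hnil : A ^ t₀ * π₀ = 0)
    (hjord : ∀ j, (A - lam j • 1) ^ t j * π j = 0) :
    ∀ τ : ℂ, NormedSpace.exp (τ • A) =
      ∑ i ∈ Finset.range t₀, (τ ^ i / (i.factorial : ℂ)) • (A ^ i * π₀) +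
      ∑ j, ∑ i ∈ Finset.range (t j),
        ((τ ^ i / (i.factorial : ℂ)) * Complex.exp (τ * lam j)) • ((A - lam j • 1) ^ i * π j) :=
  exp_smul_eq_spectral_general q p A lam t₀ t π₀ π hsum hnil hjord
end

section
/- Let N be a q×q complex matrix and m a natural number with N^{m+1} = 0. Then exp(Σ_{i=1}^m ((−1)^{i−1}/i)·N^i) = I + N, i.e., the matrix Σ_{i=1}^m ((−1)^{i−1}/i)·N^i is a logarithm of I + N. -/
/-!
Let `p` be the degree `m` Taylor polynomial of `log (1 + X)` and `Q = ∑_{k ≤ m} pᵏ / k!`.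
Since `(1 + X) p' = 1 - (-X)ᵐ` and `Q' = p' (Q - pᵐ / m!)`, the polynomial `Q` satisfies
`(1 + X) Q' = Q` modulo `Xᵐ`, with `Q(0) = 1`; hence `Q ≡ 1 + X` modulo `Xᵐ⁺¹`.
Evaluating at `N` kills `Xᵐ⁺¹` as well as every power `p(N)ᵏ` with `k > m`, so
`exp (p(N)) = Q(N) = 1 + N`.
-/

open Polynomial Finset
open scoped Nat

theorem NormedSpace.exp_eq_sum_range_of_pow_eq_zero (𝕂 : Type*) {𝔸 : Type*} [Field 𝕂] [CharZero 𝕂]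
    [Ring 𝔸] [Algebra 𝕂 𝔸] [TopologicalSpace 𝔸] [IsTopologicalRing 𝔸] {a : 𝔸} {n : ℕ}
    (ha : a ^ n = 0) : NormedSpace.exp a = ∑ k ∈ range n, (k ! : 𝕂)⁻¹ • a ^ k := by
  rw [NormedSpace.exp_eq_tsum 𝕂]
  exact tsum_eq_sum fun k hk ↦ by
    rw [pow_eq_zero_of_le (by simpa using hk) ha, smul_zero]

namespace Polynomial

theorem coeff_X_mul_derivative {R : Type*} [Semiring R] (p : R[X]) (n : ℕ) :
    (X * derivative p).coeff n = p.coeff n * n := by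
  cases n with
  | zero => simp
  | succ n => rw [coeff_X_mul, coeff_derivative]; push_cast; rfl

section Eval

variable {R A : Type*} [CommRing R] [Ring A] [Algebra R A] {a : A} {n : ℕ}

theorem aeval_eq_of_X_pow_dvd_sub (ha : a ^ n = 0) {f g : R[X]} (h : X ^ n ∣ f - g) :
    aeval a f = aeval a g := by
  obtain ⟨c, hc⟩ := h
  rw [← sub_eq_zero, ← map_sub, hc, map_mul, map_pow, aeval_X, ha, zero_mul]

theorem aeval_pow_eq_zero_of_X_dvd (ha : a ^ n = 0) {p : R[X]} (hp : X ∣ p) :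
    aeval a p ^ n = 0 := by
  rw [← map_pow, ← map_zero (aeval (R := R) a)]
  exact aeval_eq_of_X_pow_dvd_sub ha (by rw [sub_zero]; exact pow_dvd_pow_of_dvd hp n)

end Eval

variable {K : Type*} [Field K]

noncomputable def logOneAddTrunc (m : ℕ) : K[X] :=
  ∑ i ∈ Icc 1 m, ((-1 : K) ^ (i - 1) / i) • X ^ i

noncomputable def expTrunc (n : ℕ) (p : K[X]) : K[X] :=
  ∑ k ∈ range n, (k ! : K)⁻¹ • p ^ k

theorem X_dvd_logOneAddTrunc (m : ℕ) : X ∣ (logOneAddTrunc m : K[X]) :=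
  dvd_sum fun i hi ↦ dvd_smul_of_dvd _ (dvd_pow_self X (by grind))

theorem expTrunc_succ (n : ℕ) (p : K[X]) :
    expTrunc (n + 1) p = expTrunc n p + (n ! : K)⁻¹ • p ^ n :=
  sum_range_succ _ _

theorem coeff_zero_expTrunc_succ (n : ℕ) {p : K[X]} (hp : X ∣ p) :
    (expTrunc (n + 1) p).coeff 0 = 1 := by
  have hp₀ : p.eval 0 = 0 := by rw [← coeff_zero_eq_eval_zero, ← X_dvd_iff]; exact hp
  rw [expTrunc, coeff_zero_eq_eval_zero, eval_finsetSum, sum_range_succ']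
  simp [hp₀]

theorem aeval_expTrunc {A : Type*} [Ring A] [Algebra K A] (a : A) (n : ℕ) (p : K[X]) :
    aeval a (expTrunc n p) = ∑ k ∈ range n, (k ! : K)⁻¹ • aeval a p ^ k := by
  simp only [expTrunc, map_sum, map_smul, map_pow]

variable [CharZero K]

theorem derivative_logOneAddTrunc (m : ℕ) :
    derivative (logOneAddTrunc m : K[X]) = ∑ j ∈ range m, (-X) ^ j := by
  rw [logOneAddTrunc, derivative_sum, ← Ico_add_one_right_eq_Icc, sum_Ico_eq_sum_range,
    Nat.add_sub_cancel]
  refine sum_congr rfl fun j _ ↦ ?_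
  rw [add_comm 1 j, Nat.add_sub_cancel, derivative_smul, derivative_X_pow, Nat.add_sub_cancel,
    smul_eq_C_mul, ← mul_assoc, ← C_mul]
  push_cast
  rw [div_mul_cancel₀ _ (Nat.cast_add_one_ne_zero j), neg_pow (X : K[X]), map_pow, map_neg, map_one]

theorem one_add_X_mul_derivative_logOneAddTrunc (m : ℕ) :
    (1 + X) * derivative (logOneAddTrunc m : K[X]) = 1 - (-X) ^ m := by
  rw [derivative_logOneAddTrunc, ← mul_neg_geom_sum, sub_neg_eq_add]

theorem derivative_expTrunc_succ (n : ℕ) (p : K[X]) :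
    derivative (expTrunc (n + 1) p) = derivative p * expTrunc n p := by
  rw [expTrunc, derivative_sum, sum_range_succ', expTrunc, mul_sum]
  simp only [pow_zero, derivative_smul, derivative_one, smul_zero, add_zero]
  refine sum_congr rfl fun k _ ↦ ?_
  have hk : ((k + 1) ! : K)⁻¹ * (k + 1 : K) = (k ! : K)⁻¹ := by
    rw [Nat.factorial_succ]
    push_cast
    field_simp
  rw [derivative_pow_succ, smul_eq_C_mul, smul_eq_C_mul, ← mul_assoc, ← mul_assoc, ← C_mul, hk]
  ring

/-- Uniqueness for the ODE `(1 + X) D' = D` modulo `X ^ m`: its coefficients satisfy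
`(n + 1) dₙ₊₁ = (1 - n) dₙ`, so `d₀ = 0` forces `dₙ = 0` for all `n ≤ m`. -/
theorem X_pow_succ_dvd_of_X_pow_dvd_one_add_X_mul_derivative_sub {m : ℕ} {D : K[X]}
    (hD : X ^ m ∣ (1 + X) * derivative D - D) (hD₀ : D.coeff 0 = 0) : X ^ (m + 1) ∣ D := by
  rw [X_pow_dvd_iff] at hD ⊢
  intro n hn
  induction n with
  | zero => exact hD₀
  | succ n ih =>
    have hcoeff := hD n (by omega)
    rw [coeff_sub, add_mul, one_mul, coeff_add, coeff_derivative, coeff_X_mul_derivative,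
      ih (by omega), zero_mul, add_zero, sub_zero, mul_eq_zero] at hcoeff
    exact hcoeff.resolve_right (Nat.cast_add_one_ne_zero n)

theorem X_pow_succ_dvd_expTrunc_logOneAddTrunc_sub (m : ℕ) :
    X ^ (m + 1) ∣ expTrunc (m + 1) (logOneAddTrunc m : K[X]) - (1 + X) := by
  set p : K[X] := logOneAddTrunc m
  have hp : X ∣ p := X_dvd_logOneAddTrunc m
  refine X_pow_succ_dvd_of_X_pow_dvd_one_add_X_mul_derivative_sub ?_ ?_
  · have hODE : (1 + X) * derivative (expTrunc (m + 1) p - (1 + X)) - (expTrunc (m + 1) p - (1 + X))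
        = -((m ! : K)⁻¹ • p ^ m) - (-X) ^ m * expTrunc m p := by
      rw [derivative_sub, derivative_expTrunc_succ, expTrunc_succ, derivative_add, derivative_one,
        derivative_X]
      linear_combination (expTrunc m p) * one_add_X_mul_derivative_logOneAddTrunc (K := K) m
    rw [hODE]
    exact dvd_sub (dvd_neg.mpr (dvd_smul_of_dvd _ (pow_dvd_pow_of_dvd hp m)))
      ((pow_dvd_pow_of_dvd (dvd_neg.mpr dvd_rfl) m).mul_right _)
  · rw [coeff_sub, coeff_zero_expTrunc_succ m hp]
    simp

end Polynomial

/-- Let `N` be a `q × q` complex matrix and `m` a natural number with `N^{m+1} = 0`.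
Then `exp(∑_{i=1}^m ((−1)^{i−1}/i) N^i) = I + N`, i.e. `∑_{i=1}^m ((−1)^{i−1}/i) N^i`
is a logarithm of `I + N`. -/
theorem exp_log_one_add_nilpotent (q m : ℕ) (N : Matrix (Fin q) (Fin q) ℂ)
    (hN : N ^ (m + 1) = 0) :
    NormedSpace.exp (∑ i ∈ Finset.Icc 1 m, (((-1 : ℂ) ^ (i - 1) / (i : ℂ)) • N ^ i)) =
      1 + N := by
  have hlog : ∑ i ∈ Finset.Icc 1 m, (((-1 : ℂ) ^ (i - 1) / (i : ℂ)) • N ^ i) =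
      aeval N (logOneAddTrunc (K := ℂ) m) := by
    simp only [logOneAddTrunc, map_sum, map_smul, map_pow, aeval_X]
  rw [hlog, NormedSpace.exp_eq_sum_range_of_pow_eq_zero ℂ
    (aeval_pow_eq_zero_of_X_dvd hN (X_dvd_logOneAddTrunc m)), ← aeval_expTrunc,
    aeval_eq_of_X_pow_dvd_sub hN (X_pow_succ_dvd_expTrunc_logOneAddTrunc_sub m),
    map_add, map_one, aeval_X]
end

section
/- Let A be a nonsingular q×q complex matrix, let λ_1, …, λ_s be distinct nonzero complex numbers and z_1, …, z_s ∈ ℂ with e^{z_e} = λ_e for each e. Suppose there are polynomials P_{e,ij} ∈ ℂ[X] (1 ≤ e ≤ s, 1 ≤ i, j ≤ q) such that for all natural numbers k and all i, j, the (i,j) entry of A^k equals Σ_{e=1}^s P_{e,ij}(k)·λ_e^k. Then the matrix L whose (i,j) entry is Σ_{e=1}^s ( p_{e,ij,1} + p_{e,ij,0}·z_e ), where p_{e,ij,0} and p_{e,ij,1} are the coefficients of X^0 and X^1 in P_{e,ij}, satisfies exp(L) = A; i.e., L is a logarithm of A. -/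
open Polynomial Matrix

/-!
Entrywise, `F t = ∑ₑ Pₑ(t) e^{zₑ t}` is an exponential polynomial, and `F k = A ^ k` for
`k : ℕ`. Exponential polynomials are determined by their values on `ℕ` (the sequences
`k ↦ k^m λ^k` are linearly independent for distinct nonzero `λ`) and their translates are again
exponential polynomials, so `F (k + m) = F k * F m` on `ℕ` propagates to
`F (u + t) = F u * F t` on `ℂ`. A differentiable one-parameter group is `t ↦ exp (t • F'(0))`,
and `F'(0) = L`; hence `exp L = F 1 = A`.
-/

namespace Polynomial

variable {K : Type*} [Field K]

theorem eq_zero_of_forall_eval_natCast_eq_zero [CharZero K] {Q : K[X]}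
    (h : ∀ k : ℕ, Q.eval (k : K) = 0) : Q = 0 :=
  Q.eq_zero_of_infinite_isRoot <| Set.infinite_of_injective_forall_mem Nat.cast_injective h

theorem degree_taylor_sub_lt {Q : K[X]} (hQ : Q ≠ 0) (r : K) :
    (taylor r Q - Q).degree < Q.degree :=
  degree_sub_lt_right (degree_taylor Q r) hQ (leadingCoeff_taylor r Q)

theorem eq_zero_of_C_mul_taylor_eq_C_mul {a b : K} (hab : a ≠ b) {Q : K[X]} (r : K)
    (h : C a * taylor r Q = C b * Q) : Q = 0 := by
  by_contra hQ
  have := congrArg leadingCoeff h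
  rw [leadingCoeff_mul, leadingCoeff_mul, leadingCoeff_C, leadingCoeff_C, leadingCoeff_taylor]
    at this
  exact hab (mul_right_cancel₀ (leadingCoeff_ne_zero.mpr hQ) this)

theorem eval_C_mul_taylor_one_sub_C_mul_mul_pow (a b : K) (Q : K[X]) (k : ℕ) :
    (C a * taylor 1 Q - C b * Q).eval (k : K) * a ^ k =
      Q.eval ((k + 1 : ℕ) : K) * a ^ (k + 1) - b * (Q.eval (k : K) * a ^ k) := by
  simp only [eval_sub, eval_mul, eval_C, taylor_eval, Nat.cast_succ]
  ring

theorem eq_zero_of_forall_sum_eval_natCast_mul_pow_eq_zero [CharZero K] {s : ℕ}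
    {lam : Fin s → K} (hinj : Function.Injective lam) (hne : ∀ e, lam e ≠ 0) {Q : Fin s → K[X]}
    (h : ∀ k : ℕ, ∑ e, (Q e).eval (k : K) * lam e ^ k = 0) : Q = 0 := by
  induction s with
  | zero => exact Subsingleton.elim _ _
  | succ s ih =>
    set μ := lam (Fin.last s)
    have last_eq_zero : ∀ Q : Fin (s + 1) → K[X],
        (∀ k : ℕ, ∑ e, (Q e).eval (k : K) * lam e ^ k = 0) →
        (∀ e : Fin s, Q e.castSucc = 0) → Q = 0 := by
      intro Q h hQ
      suffices Q (Fin.last s) = 0 by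
        funext e
        exact Fin.lastCases this hQ e
      refine eq_zero_of_forall_eval_natCast_eq_zero fun k => ?_
      have := h k
      simp only [Fin.sum_univ_castSucc, hQ, eval_zero, zero_mul, Finset.sum_const_zero,
        zero_add] at this
      exact (mul_eq_zero.mp this).resolve_right (pow_ne_zero _ (hne _))
    -- Applying `f ↦ (k ↦ f (k + 1) - μ f k)` lowers the degree of the last coefficient and
    -- acts injectively on the others.
    suffices key : ∀ d : WithBot ℕ, ∀ Q : Fin (s + 1) → K[X],
        (Q (Fin.last s)).degree = d →
        (∀ k : ℕ, ∑ e, (Q e).eval (k : K) * lam e ^ k = 0) → Q = 0 from key _ Q rfl h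
    intro d
    induction d using WellFoundedLT.induction with
    | _ d ihd =>
    intro Q hd h
    by_cases hQ : Q (Fin.last s) = 0
    · refine last_eq_zero Q h (congrFun (ih (hinj.comp (Fin.castSucc_injective s))
        (fun e => hne _) fun k => ?_))
      simpa [Fin.sum_univ_castSucc, hQ] using h k
    set Q' := fun e => C (lam e) * taylor 1 (Q e) - C μ * Q e
    have hdeg : (Q' (Fin.last s)).degree < d := by
      rw [← hd, show Q' (Fin.last s) = C μ * (taylor 1 (Q (Fin.last s)) - Q (Fin.last s)) by
        simp only [Q', μ, mul_sub], degree_C_mul (hne _)]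
      exact degree_taylor_sub_lt hQ 1
    have hsum : ∀ k : ℕ, ∑ e, (Q' e).eval (k : K) * lam e ^ k = 0 := fun k => by
      simp only [Q', eval_C_mul_taylor_one_sub_C_mul_mul_pow, Finset.sum_sub_distrib,
        ← Finset.mul_sum, h, mul_zero, sub_zero]
    have hQ' : Q' = 0 := ihd _ hdeg Q' rfl hsum
    refine last_eq_zero Q h fun e => eq_zero_of_C_mul_taylor_eq_C_mul
      (fun heq => (Fin.castSucc_lt_last e).ne (hinj heq)) 1 (sub_eq_zero.mp (congrFun hQ' _))

end Polynomial

section ExpPoly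

variable {s : ℕ} (z : Fin s → ℂ)

noncomputable def expPoly : (Fin s → ℂ[X]) →ₗ[ℂ] ℂ → ℂ where
  toFun Q t := ∑ e, (Q e).eval t * Complex.exp (z e * t)
  map_add' Q R := by
    funext t
    simp only [Pi.add_apply, eval_add, add_mul, Finset.sum_add_distrib]
  map_smul' c Q := by
    funext t
    simp only [Pi.smul_apply, eval_smul, smul_eq_mul, RingHom.id_apply, Finset.mul_sum, mul_assoc]

variable {z}

theorem expPoly_apply (Q : Fin s → ℂ[X]) (t : ℂ) :
    expPoly z Q t = ∑ e, (Q e).eval t * Complex.exp (z e * t) :=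
  rfl

theorem expPoly_apply_natCast (Q : Fin s → ℂ[X]) (k : ℕ) :
    expPoly z Q k = ∑ e, (Q e).eval (k : ℂ) * Complex.exp (z e) ^ k := by
  simp only [expPoly_apply, mul_comm (z _), Complex.exp_nat_mul]

theorem eq_zero_of_mem_range_expPoly (hz : Function.Injective (Complex.exp ∘ z)) {f : ℂ → ℂ}
    (hf : f ∈ LinearMap.range (expPoly z)) (h : ∀ k : ℕ, f k = 0) : f = 0 := by
  obtain ⟨Q, rfl⟩ := hf
  have hQ : Q = 0 := eq_zero_of_forall_sum_eval_natCast_mul_pow_eq_zero hz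
    (fun e => Complex.exp_ne_zero _) fun k => (expPoly_apply_natCast Q k).symm.trans (h k)
  rw [hQ, map_zero]

theorem comp_add_const_mem_range_expPoly {f : ℂ → ℂ} (hf : f ∈ LinearMap.range (expPoly z))
    (c : ℂ) : (fun t => f (t + c)) ∈ LinearMap.range (expPoly z) := by
  obtain ⟨Q, rfl⟩ := hf
  refine ⟨fun e => Complex.exp (z e * c) • taylor c (Q e), funext fun t => ?_⟩
  simp only [expPoly_apply, eval_smul, taylor_eval, smul_eq_mul, mul_add, Complex.exp_add]
  exact Finset.sum_congr rfl fun e _ => by ring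

theorem hasDerivAt_expPoly_zero (Q : Fin s → ℂ[X]) :
    HasDerivAt (expPoly z Q) (∑ e, ((Q e).coeff 1 + (Q e).coeff 0 * z e)) 0 := by
  have hterm (e : Fin s) : HasDerivAt (fun t => (Q e).eval t * Complex.exp (z e * t))
      ((Q e).coeff 1 + (Q e).coeff 0 * z e) 0 := by
    have hexp : HasDerivAt (fun t => Complex.exp (z e * t)) (z e) 0 := by
      simpa using ((hasDerivAt_id (0 : ℂ)).const_mul (z e)).cexp
    refine ((Q e).hasDerivAt 0).fun_mul hexp |>.congr_deriv ?_
    rw [mul_zero, Complex.exp_zero, mul_one, ← coeff_zero_eq_eval_zero,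
      ← coeff_zero_eq_eval_zero, coeff_derivative]
    norm_num
  show HasDerivAt (fun t => ∑ e, (Q e).eval t * Complex.exp (z e * t)) _ 0
  exact HasDerivAt.fun_sum fun e _ => hterm e

end ExpPoly

namespace Matrix

variable {R : Type*} [CommRing R] {n : Type*}

section
variable {α : Type*} [Fintype n] {V : Submodule R (α → R)} {F : α → Matrix n n R}

theorem mul_apply_mem_of_apply_mem_right (hF : ∀ i j, (fun t => F t i j) ∈ V)
    (M : Matrix n n R) (i j : n) : (fun t => (M * F t) i j) ∈ V := by
  have : (fun t => (M * F t) i j) = ∑ l, M i l • fun t => F t l j := by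
    ext t
    simp [mul_apply]
  exact this ▸ Submodule.sum_mem _ fun l _ => Submodule.smul_mem _ _ (hF l j)

theorem mul_apply_mem_of_apply_mem_left (hF : ∀ i j, (fun t => F t i j) ∈ V)
    (M : Matrix n n R) (i j : n) : (fun t => (F t * M) i j) ∈ V := by
  have : (fun t => (F t * M) i j) = ∑ l, M l j • fun t => F t i l := by
    ext t
    simp [mul_apply, mul_comm]
  exact this ▸ Submodule.sum_mem _ fun l _ => Submodule.smul_mem _ _ (hF i l)

end

variable {V : Submodule R (R → R)}

theorem funext_of_natCast (huniq : ∀ f ∈ V, (∀ k : ℕ, f k = 0) → f = 0)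
    {F G : R → Matrix n n R} (hF : ∀ i j, (fun t => F t i j) ∈ V)
    (hG : ∀ i j, (fun t => G t i j) ∈ V) (h : ∀ k : ℕ, F k = G k) : F = G := by
  funext t
  ext i j
  have := huniq _ (V.sub_mem (hF i j) (hG i j)) fun k => by simp [h k]
  exact sub_eq_zero.mp (congrFun this t)

theorem map_add_eq_mul_of_natCast [Fintype n]
    (huniq : ∀ f ∈ V, (∀ k : ℕ, f k = 0) → f = 0)
    (hshift : ∀ f ∈ V, ∀ c, (fun t => f (t + c)) ∈ V) {F : R → Matrix n n R}
    (hF : ∀ i j, (fun t => F t i j) ∈ V) (hnat : ∀ k m : ℕ, F (k + m) = F k * F m)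
    (u t : R) :
    F (u + t) = F u * F t := by
  have hshiftF (c : R) (i j : n) : (fun t => F (t + c) i j) ∈ V := hshift _ (hF i j) c
  have hnat_add (k : ℕ) : (fun t => F (t + k)) = fun t => F k * F t :=
    funext_of_natCast huniq (hshiftF k) (mul_apply_mem_of_apply_mem_right hF _) fun m => by
      rw [add_comm, hnat]
  have hadd : (fun u => F (u + t)) = fun u => F u * F t :=
    funext_of_natCast huniq (hshiftF t) (mul_apply_mem_of_apply_mem_left hF _) fun k => by
      rw [add_comm, congrFun (hnat_add k) t]
  exact congrFun hadd u

end Matrix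

section OneParameterGroup

open NormedSpace

variable {𝕂 𝔸 : Type*} [RCLike 𝕂] [NormedRing 𝔸] [NormedAlgebra 𝕂 𝔸] [CompleteSpace 𝔸]

theorem eq_exp_smul_of_map_add {F : 𝕂 → 𝔸} {L : 𝔸} (hmul : ∀ u t, F (u + t) = F u * F t)
    (h0 : F 0 = 1) (hL : HasDerivAt F L 0) (t : 𝕂) : F t = exp (t • L) := by
  have hderiv (t : 𝕂) : HasDerivAt F (L * F t) t := by
    have : HasDerivAt (fun u => F (u - t) * F t) (L * F t) t :=
      ((sub_self t ▸ hL).comp_sub_const t t).mul_const (F t)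
    exact this.congr_of_eventuallyEq (Filter.Eventually.of_forall fun u => by
      simp only [← hmul, sub_add_cancel])
  have hconst (s : 𝕂) : exp (s • -L) * F s = 1 := by
    have hd (u : 𝕂) : HasDerivAt (fun u => exp (u • -L) * F u) 0 u := by
      refine (hasDerivAt_exp_smul_const (-L) u).mul (hderiv u) |>.congr_deriv ?_
      rw [mul_neg, neg_mul, mul_assoc, neg_add_cancel]
    simpa [h0] using
      is_const_of_deriv_eq_zero (fun u => (hd u).differentiableAt) (fun u => (hd u).deriv) s 0
  have hball (x : 𝔸) : x ∈ Metric.eball (0 : 𝔸) (expSeries 𝕂 𝔸).radius :=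
    (expSeries_radius_eq_top 𝕂 𝔸).symm ▸ edist_lt_top _ _
  have hinv : exp (t • L) * exp (t • -L) = 1 := by
    rw [← exp_add_of_commute_of_mem_ball ((Commute.refl L).neg_right.smul_left t |>.smul_right t)
      (hball _) (hball _), smul_neg, add_neg_cancel, exp_zero]
  calc F t = exp (t • L) * (exp (t • -L) * F t) := by rw [← mul_assoc, hinv, one_mul]
    _ = exp (t • L) := by rw [hconst, mul_one]

end OneParameterGroup

open scoped Matrix.Norms.Operator in
theorem Matrix.hasDerivAt_of_hasDerivAt_apply {𝕜 : Type*} [NontriviallyNormedField 𝕜]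
    {m n : Type*} [Fintype m] [Fintype n] [DecidableEq m] [DecidableEq n]
    {F : 𝕜 → Matrix m n 𝕜} {L : Matrix m n 𝕜} {x : 𝕜}
    (h : ∀ i j, HasDerivAt (fun t => F t i j) (L i j) x) : HasDerivAt F L x := by
  have hsum (M : Matrix m n 𝕜) : M = ∑ i, ∑ j, M i j • single i j (1 : 𝕜) := by
    simpa only [smul_single, smul_eq_mul, mul_one] using matrix_eq_sum_single M
  rw [hsum L, funext fun t => hsum (F t)]
  exact HasDerivAt.fun_sum fun i _ => HasDerivAt.fun_sum fun j _ => (h i j).smul_const _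

theorem log_of_power_expansion_general (q : ℕ) (s : ℕ)
    (A : Matrix (Fin q) (Fin q) ℂ)
    (lam : Fin s → ℂ) (hinj : Function.Injective lam)
    (z : Fin s → ℂ) (hz : ∀ e, Complex.exp (z e) = lam e)
    (P : Fin s → Fin q → Fin q → Polynomial ℂ)
    (hP : ∀ (k : ℕ) (i j : Fin q),
      (A ^ k) i j = ∑ e, (P e i j).eval (k : ℂ) * lam e ^ k)
    (L : Matrix (Fin q) (Fin q) ℂ)
    (hL : L = Matrix.of fun i j => ∑ e, ((P e i j).coeff 1 + (P e i j).coeff 0 * z e)) :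
    NormedSpace.exp L = A := by
  set F : ℂ → Matrix (Fin q) (Fin q) ℂ := fun t => Matrix.of fun i j => expPoly z (P · i j) t
  have hF_nat (k : ℕ) : F k = A ^ k := by
    ext i j
    simp [F, expPoly_apply_natCast, hz, hP]
  have hmul : ∀ u t, F (u + t) = F u * F t :=
    Matrix.map_add_eq_mul_of_natCast
      (fun _ => eq_zero_of_mem_range_expPoly (by rwa [show Complex.exp ∘ z = lam from funext hz]))
      (fun _ hf c => comp_add_const_mem_range_expPoly hf c) (fun i j => ⟨_, rfl⟩)
      fun k m => by rw [← Nat.cast_add, hF_nat, hF_nat, hF_nat, pow_add]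
  -- `exp` depends only on the topology, so any Banach-algebra norm on matrices will do.
  open scoped Matrix.Norms.Operator in
  have hderiv : HasDerivAt F L 0 :=
    Matrix.hasDerivAt_of_hasDerivAt_apply fun i j => hL ▸ hasDerivAt_expPoly_zero _
  have h0 : F 0 = 1 := by simpa using hF_nat 0
  have h1 : F 1 = A := by simpa using hF_nat 1
  have hexp := eq_exp_smul_of_map_add hmul h0 hderiv 1
  rw [h1, one_smul] at hexp
  exact hexp.symm

/-- Let `A` be a nonsingular `q × q` complex matrix, `λ₁, …, λ_s` distinct nonzero complex
numbers with `e^{z_e} = λ_e`, and `P_{e,ij} ∈ ℂ[X]` polynomials such that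
`(A^k)_{ij} = ∑_e P_{e,ij}(k) λ_e^k` for all `k`.  Then the matrix `L` with entries
`L_{ij} = ∑_e (p_{e,ij,1} + p_{e,ij,0} z_e)`, where `p_{e,ij,0}`, `p_{e,ij,1}` are the
coefficients of `X^0` and `X^1` in `P_{e,ij}`, satisfies `exp L = A`. -/
theorem log_of_power_expansion (q : ℕ) (hq : 0 < q) (s : ℕ)
    (A : Matrix (Fin q) (Fin q) ℂ) (hA : IsUnit A.det)
    (lam : Fin s → ℂ) (hinj : Function.Injective lam) (hne : ∀ e, lam e ≠ 0)
    (z : Fin s → ℂ) (hz : ∀ e, Complex.exp (z e) = lam e)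
    (P : Fin s → Fin q → Fin q → Polynomial ℂ)
    (hP : ∀ (k : ℕ) (i j : Fin q),
      (A ^ k) i j = ∑ e, (P e i j).eval (k : ℂ) * lam e ^ k)
    (L : Matrix (Fin q) (Fin q) ℂ)
    (hL : L = Matrix.of fun i j => ∑ e, ((P e i j).coeff 1 + (P e i j).coeff 0 * z e)) :
    NormedSpace.exp L = A :=
  log_of_power_expansion_general q s A lam hinj z hz P hP L hL
end

section
/- With spectral projections π_0, π_1, …, π_p of A as in the context, for every natural number k one has A^k = Σ_{i=0}^{t₀−1} δ_{i,k}·A^i·π_0 + Σ_{j=1}^p Σ_{i=0}^{t_j−1} C(k,i)·λ_j^k·λ_j^{−i}·(A − λ_j I)^i·π_j, where δ_{i,k} is the Kronecker delta and C(k,i) the binomial coefficient. -/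
open Polynomial Matrix

/-- Let `A` be a `q × q` complex matrix with minimal polynomial
`X^{t₀} ∏_j (X − λ_j)^{t_j}` (the `λ_j` distinct and nonzero, `t_j ≥ 1`), and let
`π₀, π₁, …, π_p` be its spectral projections at `0, λ₁, …, λ_p`.  Then for every `k`,
`A^k = ∑_{i<t₀} δ_{i,k} A^i π₀ + ∑_j ∑_{i<t_j} C(k,i) λ_j^k λ_j^{−i} (A − λ_j I)^i π_j`. -/
theorem pow_eq_spectral (q : ℕ) (hq : 0 < q) (p : ℕ)
    (A : Matrix (Fin q) (Fin q) ℂ)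
    (lam : Fin p → ℂ) (hinj : Function.Injective lam) (hne : ∀ j, lam j ≠ 0)
    (t₀ : ℕ) (t : Fin p → ℕ) (ht : ∀ j, 1 ≤ t j)
    (hmin : minpoly ℂ A = X ^ t₀ * ∏ j, (X - C (lam j)) ^ t j)
    (π₀ : Matrix (Fin q) (Fin q) ℂ) (π : Fin p → Matrix (Fin q) (Fin q) ℂ)
    (hsum : π₀ + ∑ j, π j = 1)
    (horth₁ : ∀ j, π₀ * π j = 0) (horth₂ : ∀ j, π j * π₀ = 0)
    (horth : ∀ j j', j ≠ j' → π j * π j' = 0)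
    (hidem₀ : π₀ * π₀ = π₀) (hidem : ∀ j, π j * π j = π j)
    (hcomm₀ : A * π₀ = π₀ * A) (hcomm : ∀ j, A * π j = π j * A)
    (hnil : A ^ t₀ * π₀ = 0)
    (hjord : ∀ j, (A - lam j • 1) ^ t j * π j = 0) :
    ∀ k : ℕ, A ^ k =
      ∑ i ∈ Finset.range t₀, (if i = k then (1 : ℂ) else 0) • (A ^ i * π₀) +
      ∑ j, ∑ i ∈ Finset.range (t j),
        ((k.choose i : ℂ) * lam j ^ k * ((lam j)⁻¹) ^ i) • ((A - lam j • 1) ^ i * π j) := by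
  intro k
  have h0 : A ^ k * π₀ =
      ∑ i ∈ Finset.range t₀, (if i = k then (1 : ℂ) else 0) • (A ^ i * π₀) := by
    simp only [ite_smul, one_smul, zero_smul]
    rw [Finset.sum_ite_eq' (Finset.range t₀) k (fun i => A ^ i * π₀)]
    by_cases hk : k ∈ Finset.range t₀
    · simp [hk]
    · simp only [hk, if_false]
      have hk' : t₀ ≤ k := by simpa using hk
      calc A ^ k * π₀ = A ^ (k - t₀) * (A ^ t₀ * π₀) := by
            rw [← mul_assoc, ← pow_add]; congr 2; omega
        _ = 0 := by rw [hnil, mul_zero]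
  have hj : ∀ j, A ^ k * π j =
      ∑ i ∈ Finset.range (t j),
        ((k.choose i : ℂ) * lam j ^ k * ((lam j)⁻¹) ^ i) • ((A - lam j • 1) ^ i * π j) := by
    intro j
    set N := A - lam j • 1 with hN
    have hA : A = N + lam j • 1 := by rw [hN]; abel
    have hcN : Commute N (lam j • (1 : Matrix (Fin q) (Fin q) ℂ)) :=
      (Commute.one_right N).smul_right _
    have hNzero : ∀ i, t j ≤ i → N ^ i * π j = 0 := by
      intro i hi
      calc N ^ i * π j = N ^ (i - t j) * (N ^ t j * π j) := by
            rw [← mul_assoc, ← pow_add]; congr 2; omega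
        _ = 0 := by rw [hN, hjord j, mul_zero]
    have hcast : ∀ i : ℕ, ((k.choose i : ℕ) : Matrix (Fin q) (Fin q) ℂ)
        = (k.choose i : ℂ) • 1 := by
      intro i; rw [Nat.cast_smul_eq_nsmul, nsmul_eq_mul, mul_one]
    have expand : A ^ k * π j =
        ∑ i ∈ Finset.range (k + 1),
          ((k.choose i : ℂ) * lam j ^ (k - i)) • (N ^ i * π j) := by
      rw [hA, hcN.add_pow, Finset.sum_mul]
      refine Finset.sum_congr rfl fun i _ => ?_
      rw [_root_.smul_pow, one_pow, hcast i]
      simp only [smul_mul_assoc, mul_smul_comm, mul_one, Matrix.mul_one]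
      rw [smul_smul, mul_comm]
    set M := max (k + 1) (t j) with hM
    set g : ℕ → Matrix (Fin q) (Fin q) ℂ := fun i =>
      ((k.choose i : ℂ) * lam j ^ k * ((lam j)⁻¹) ^ i) • (N ^ i * π j) with hg
    have e1 : ∑ i ∈ Finset.range (k + 1),
        ((k.choose i : ℂ) * lam j ^ (k - i)) • (N ^ i * π j)
        = ∑ i ∈ Finset.range (k + 1), g i := by
      refine Finset.sum_congr rfl fun i hi => ?_
      have hik : i ≤ k := by simpa [Nat.lt_succ_iff] using hi
      have hpow : lam j ^ (k - i) = lam j ^ k * ((lam j)⁻¹) ^ i := by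
        rw [pow_sub₀ _ (hne j) hik, inv_pow]
      rw [hg]; simp only []
      rw [mul_assoc, ← hpow]
    have e2 : ∑ i ∈ Finset.range (k + 1), g i = ∑ i ∈ Finset.range M, g i := by
      refine Finset.sum_subset (Finset.range_subset_range.mpr (le_max_left _ _)) ?_
      intro i _ hi
      have : k < i := by simpa [Nat.lt_succ_iff] using hi
      simp [hg, Nat.choose_eq_zero_of_lt this]
    have e3 : ∑ i ∈ Finset.range (t j), g i = ∑ i ∈ Finset.range M, g i := by
      refine Finset.sum_subset (Finset.range_subset_range.mpr (le_max_right _ _)) ?_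
      intro i _ hi
      have : t j ≤ i := by simpa using hi
      simp [hg, hNzero i this]
    rw [expand, e1, e2, ← e3]
  rw [← h0]
  conv_rhs => rw [Finset.sum_congr rfl fun j _ => (hj j).symm]
  rw [← Finset.mul_sum, ← mul_add, hsum, mul_one]
end
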